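/- arXiv:2110.04799 — 4 statements merged into one kernel-verified Lean document; each statement's English description precedes it below -/
import Mathlib

section
/- For every positive integer n, 16·T(1,1,3;n) = N(1,1,3;4(8n+5)) − N(1,1,3;8n+5). -/
set_option linter.all false

/-- Number of representations of `n` as `a*x^2 + b*y^2 + c*z^2` with `x,y,z : ℤ`. -/
noncomputable def N (a b c n : ℕ) : ℕ :=
  Nat.card {p : ℤ × ℤ × ℤ //
    (a : ℤ) * p.1 ^ 2 + (b : ℤ) * p.2.1 ^ 2 + (c : ℤ) * p.2.2 ^ 2 = (n : ℤ)}

/-- Number of representations of `n` as `a*x(x+1)/2 + b*y(y+1)/2 + c*z(z+1)/2` with `x,y,z : ℕ`. -/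
noncomputable def T (a b c n : ℕ) : ℕ :=
  Nat.card {p : ℕ × ℕ × ℕ //
    a * (p.1 * (p.1 + 1) / 2) + b * (p.2.1 * (p.2.1 + 1) / 2)
      + c * (p.2.2 * (p.2.2 + 1) / 2) = n}

/-! ### Infrastructure -/

lemma card_split {α : Type*} (P Q : α → Prop) [Finite {a // P a}] :
    Nat.card {a // P a} = Nat.card {a // P a ∧ Q a} + Nat.card {a // P a ∧ ¬ Q a} := by
  classical
  haveI : Finite {a // P a ∧ Q a} :=
    Finite.of_injective (fun x => (⟨x.1, x.2.1⟩ : {a // P a}))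
      (fun x y h => by cases x; cases y; simpa [Subtype.ext_iff] using h)
  haveI : Finite {a // P a ∧ ¬ Q a} :=
    Finite.of_injective (fun x => (⟨x.1, x.2.1⟩ : {a // P a}))
      (fun x y h => by cases x; cases y; simpa [Subtype.ext_iff] using h)
  rw [← Nat.card_sum]
  apply Nat.card_congr
  exact {
    toFun := fun x => if h : Q x.1 then Sum.inl ⟨x.1, x.2, h⟩ else Sum.inr ⟨x.1, x.2, h⟩
    invFun := Sum.elim (fun x => ⟨x.1, x.2.1⟩) (fun x => ⟨x.1, x.2.1⟩)
    left_inv := by rintro ⟨a, h⟩; by_cases hq : Q a <;> simp [hq]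
    right_inv := by rintro (⟨a, h1, h2⟩ | ⟨a, h1, h2⟩) <;> simp [h2] }

lemma fin_sub {α : Type*} {P Q : α → Prop} (hfin : Finite {a // P a}) (h : ∀ a, Q a → P a) :
    Finite {a // Q a} :=
  Finite.of_injective (fun x => (⟨x.1, h x.1 x.2⟩ : {a // P a}))
    (fun x y hxy => by cases x; cases y; simpa [Subtype.ext_iff] using hxy)

lemma finite_sol (k : ℤ) :
    Finite {p : ℤ × ℤ × ℤ // p.1 ^ 2 + p.2.1 ^ 2 + 3 * p.2.2 ^ 2 = k} := by
  have hsub : {p : ℤ × ℤ × ℤ | p.1 ^ 2 + p.2.1 ^ 2 + 3 * p.2.2 ^ 2 = k} ⊆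
      Set.Icc (-k) k ×ˢ (Set.Icc (-k) k ×ˢ Set.Icc (-k) k) := by
    rintro ⟨x, y, z⟩ h
    simp only [Set.mem_setOf_eq] at h
    simp only [Set.mem_prod, Set.mem_Icc]
    refine ⟨⟨?_, ?_⟩, ⟨?_, ?_⟩, ?_, ?_⟩ <;> nlinarith [sq_nonneg x, sq_nonneg y, sq_nonneg z,
      sq_nonneg (x-1), sq_nonneg (x+1), sq_nonneg (y-1), sq_nonneg (y+1),
      sq_nonneg (z-1), sq_nonneg (z+1)]
  exact (Set.Finite.subset (((Set.finite_Icc _ _).prod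
    ((Set.finite_Icc _ _).prod (Set.finite_Icc _ _)))) hsub).to_subtype

/-! ### 2-adic arithmetic lemmas -/

lemma triPcase (q r : ℤ) :
    ((8*q+r)*(8*q+r)+(8*q+r)) = 64*(q*q)+16*(q*r)+8*q+(r*r+r) := by ring

lemma triP (a : ℤ) :
    (a % 8 = 0 ∧ (a*a+a) % 8 = 0) ∨ (a % 8 = 1 ∧ (a*a+a) % 8 = 2) ∨
    (a % 8 = 2 ∧ (a*a+a) % 8 = 6) ∨ (a % 8 = 3 ∧ (a*a+a) % 8 = 4) ∨
    (a % 8 = 4 ∧ (a*a+a) % 8 = 4) ∨ (a % 8 = 5 ∧ (a*a+a) % 8 = 6) ∨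
    (a % 8 = 6 ∧ (a*a+a) % 8 = 2) ∨ (a % 8 = 7 ∧ (a*a+a) % 8 = 0) := by
  rcases (by omega : a % 8 = 0 ∨ a % 8 = 1 ∨ a % 8 = 2 ∨ a % 8 = 3 ∨ a % 8 = 4 ∨
      a % 8 = 5 ∨ a % 8 = 6 ∨ a % 8 = 7) with h|h|h|h|h|h|h|h
  · obtain ⟨q, hq⟩ : ∃ q, a = 8*q + 0 := ⟨a/8, by omega⟩
    subst hq; have key := triPcase q 0; omega
  · obtain ⟨q, hq⟩ : ∃ q, a = 8*q + 1 := ⟨a/8, by omega⟩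
    subst hq; have key := triPcase q 1; omega
  · obtain ⟨q, hq⟩ : ∃ q, a = 8*q + 2 := ⟨a/8, by omega⟩
    subst hq; have key := triPcase q 2; omega
  · obtain ⟨q, hq⟩ : ∃ q, a = 8*q + 3 := ⟨a/8, by omega⟩
    subst hq; have key := triPcase q 3; omega
  · obtain ⟨q, hq⟩ : ∃ q, a = 8*q + 4 := ⟨a/8, by omega⟩
    subst hq; have key := triPcase q 4; omega
  · obtain ⟨q, hq⟩ : ∃ q, a = 8*q + 5 := ⟨a/8, by omega⟩
    subst hq; have key := triPcase q 5; omega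
  · obtain ⟨q, hq⟩ : ∃ q, a = 8*q + 6 := ⟨a/8, by omega⟩
    subst hq; have key := triPcase q 6; omega
  · obtain ⟨q, hq⟩ : ∃ q, a = 8*q + 7 := ⟨a/8, by omega⟩
    subst hq; have key := triPcase q 7; omega

lemma master (n x y z : ℤ) (h : x^2 + y^2 + 3*z^2 = 32*n+20) (hx : x % 2 = 1) :
    z % 2 = 1 ∧ y % 4 = 0 ∧
      ((∃ s t, x + z = 8*s ∧ y = 4*t ∧ (s+t) % 2 = 1) ∨
       (∃ s t, x - z = 8*s ∧ y = 4*t ∧ (s+t) % 2 = 1)) := by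
  obtain ⟨a, ha⟩ : ∃ a, x = 2*a+1 := ⟨(x-1)/2, by omega⟩
  subst ha
  have hz : z % 2 = 1 := by
    by_contra hz'
    obtain ⟨c, hc⟩ : ∃ c, z = 2*c := ⟨z/2, by omega⟩
    subst hc
    rcases (by omega : y % 2 = 0 ∨ y % 2 = 1) with hy | hy
    · obtain ⟨d, hd⟩ : ∃ d, y = 2*d := ⟨y/2, by omega⟩
      subst hd
      have key : 4*(a*a) + 4*a + 4*(d*d) + 12*(c*c) + 1 = 32*n + 20 := by linear_combination h
      omega
    · obtain ⟨d, hd⟩ : ∃ d, y = 2*d+1 := ⟨y/2, by omega⟩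
      subst hd
      have key : 4*(a*a) + 4*a + 4*(d*d) + 4*d + 12*(c*c) + 2 = 32*n + 20 := by
        linear_combination h
      omega
  obtain ⟨c, hc⟩ : ∃ c, z = 2*c+1 := ⟨(z-1)/2, by omega⟩
  subst hc
  have hy4 : y % 4 = 0 := by
    rcases (by omega : y % 2 = 0 ∨ y % 2 = 1) with hy | hy
    · obtain ⟨d, hd⟩ : ∃ d, y = 2*d := ⟨y/2, by omega⟩
      subst hd
      have key : 4*(a*a+a) + 4*(d*d) + 12*(c*c+c) + 4 = 32*n + 20 := by linear_combination h
      obtain ⟨k1, hk1⟩ := Int.even_mul_succ_self a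
      obtain ⟨k2, hk2⟩ := Int.even_mul_succ_self c
      obtain ⟨k3, hk3⟩ := Int.even_mul_succ_self d
      have e1 : a*a+a = 2*k1 := by linear_combination hk1
      have e2 : c*c+c = 2*k2 := by linear_combination hk2
      have e3 : d*d+d = 2*k3 := by linear_combination hk3
      omega
    · obtain ⟨d, hd⟩ : ∃ d, y = 2*d+1 := ⟨y/2, by omega⟩
      subst hd
      have key : 4*(a*a+a) + 4*(d*d+d) + 12*(c*c+c) + 5 = 32*n + 20 := by linear_combination h
      omega
  refine ⟨by omega, hy4, ?_⟩
  obtain ⟨t, ht⟩ : ∃ t, y = 4*t := ⟨y/4, by omega⟩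
  subst ht
  have key : 4*(a*a+a) + 16*(t*t) + 12*(c*c+c) + 4 = 32*n + 20 := by linear_combination h
  obtain ⟨kt, hkt⟩ := Int.even_mul_succ_self t
  have et : t*t+t = 2*kt := by linear_combination hkt
  have hA := triP a
  have hC := triP c
  have hcl : (a + c) % 4 = 3 ∨ (a - c) % 4 = 0 := by omega
  rcases hcl with hcl | hcl
  · left
    obtain ⟨s, hs⟩ : ∃ s, a + c + 1 = 4*s := ⟨(a+c+1)/4, by omega⟩
    exact ⟨s, t, by omega, rfl, by omega⟩
  · right
    obtain ⟨s, hs⟩ : ∃ s, a - c = 4*s := ⟨(a-c)/4, by omega⟩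
    exact ⟨s, t, by omega, rfl, by omega⟩

/-! ### The main bijection -/

/-- forward map from all-odd solutions of `8n+5` to solutions of `32n+20` with odd first
coordinate -/
def raw : ℤ × ℤ × ℤ → ℤ × ℤ × ℤ
  | (X, Y, Z) =>
    if (X - Z) % 4 = 0 then
      ((-3*X-2*Y+3*Z)/2, -X-3*Z, (-X+2*Y+Z)/2)
    else
      ((-3*X-2*Y-3*Z)/2, -X+3*Z, (X-2*Y+Z)/2)

set_option maxHeartbeats 2000000 in
lemma card_S1 (n : ℤ) :
    Nat.card {p : ℤ × ℤ × ℤ // p.1^2 + p.2.1^2 + 3*p.2.2^2 = 8*n+5 ∧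
        Odd p.1 ∧ Odd p.2.1 ∧ Odd p.2.2} =
    Nat.card {p : ℤ × ℤ × ℤ // p.1^2 + p.2.1^2 + 3*p.2.2^2 = 32*n+20 ∧ Odd p.1} := by
  have wd : ∀ p : ℤ × ℤ × ℤ, (p.1^2 + p.2.1^2 + 3*p.2.2^2 = 8*n+5 ∧
      Odd p.1 ∧ Odd p.2.1 ∧ Odd p.2.2) →
      ((raw p).1^2 + (raw p).2.1^2 + 3*(raw p).2.2^2 = 32*n+20 ∧ Odd (raw p).1) := by
    rintro ⟨X, Y, Z⟩ ⟨hQ, hX, hY, hZ⟩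
    dsimp only at hQ hX hY hZ ⊢
    rw [Int.odd_iff] at hX hY hZ
    simp only [raw]
    by_cases hcl : (X - Z) % 4 = 0
    · rw [if_pos hcl]
      obtain ⟨k, hk⟩ : ∃ k, Z = X + 4*k := ⟨(Z-X)/4, by omega⟩
      subst hk
      have e1 : (-3*X-2*Y+3*(X+4*k))/2 = 6*k - Y := by omega
      have e3 : (-X+2*Y+(X+4*k))/2 = Y + 2*k := by omega
      simp only
      rw [e1, e3]
      constructor
      · linear_combination 4*hQ
      · rw [Int.odd_iff]; omega
    · rw [if_neg hcl]
      obtain ⟨k, hk⟩ : ∃ k, Z = X + 4*k + 2 := ⟨(Z-X-2)/4, by omega⟩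
      subst hk
      have e1 : (-3*X-2*Y-3*(X+4*k+2))/2 = -3*X - Y - 6*k - 3 := by omega
      have e3 : (X-2*Y+(X+4*k+2))/2 = X - Y + 2*k + 1 := by omega
      simp only
      rw [e1, e3]
      constructor
      · linear_combination 4*hQ
      · rw [Int.odd_iff]; omega
  apply Nat.card_eq_of_bijective (fun v => ⟨raw v.1, wd v.1 v.2⟩)
  constructor
  · rintro ⟨⟨X, Y, Z⟩, hQ, hX, hY, hZ⟩ ⟨⟨X', Y', Z'⟩, hQ', hX', hY', hZ'⟩ h
    dsimp only at hQ hX hY hZ hQ' hX' hY' hZ'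
    rw [Int.odd_iff] at hX hY hZ hX' hY' hZ'
    have h' : raw (X, Y, Z) = raw (X', Y', Z') := congrArg Subtype.val h
    apply Subtype.ext
    show (X, Y, Z) = (X', Y', Z')
    clear h hQ hQ'
    simp only [raw] at h'
    simp only [Prod.mk.injEq]
    split_ifs at h' with c1 c2 c2 <;>
      simp only [Prod.mk.injEq] at h' <;>
      obtain ⟨h1, h2, h3⟩ := h' <;>
      refine ⟨by omega, by omega, by omega⟩
  · rintro ⟨⟨x, y, z⟩, hQ, hx⟩
    dsimp only at hQ hx
    rw [Int.odd_iff] at hx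
    obtain ⟨hz, hy4, hdi⟩ := master n x y z hQ hx
    clear hy4
    rcases hdi with ⟨s, t, hs, ht, hst⟩ | ⟨s, t, hs, ht, hst⟩
    · obtain ⟨hx', hy'⟩ : x = 8*s - z ∧ y = 4*t := by omega
      subst hx' hy'
      refine ⟨⟨(-3*s-t, z-2*s, s-t), ⟨?_, ?_, ?_, ?_⟩⟩, ?_⟩ <;> dsimp only
      · have h4 : 4*((-3*s-t)^2 + (z-2*s)^2 + 3*(s-t)^2) = 4*(8*n+5) := by
          linear_combination hQ
        exact mul_left_cancel₀ (by norm_num) h4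
      · rw [Int.odd_iff]; omega
      · rw [Int.odd_iff]; omega
      · rw [Int.odd_iff]; omega
      · apply Subtype.ext
        show raw (-3*s-t, z-2*s, s-t) = (8*s-z, 4*t, z)
        simp only [raw]
        rw [if_pos (by omega)]
        simp only [Prod.mk.injEq]
        refine ⟨by omega, by omega, by omega⟩
    · obtain ⟨hx', hy'⟩ : x = 8*s + z ∧ y = 4*t := by omega
      subst hx' hy'
      refine ⟨⟨(-3*s-t, -2*s-z, t-s), ⟨?_, ?_, ?_, ?_⟩⟩, ?_⟩ <;> dsimp only
      · have h4 : 4*((-3*s-t)^2 + (-2*s-z)^2 + 3*(t-s)^2) = 4*(8*n+5) := by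
          linear_combination hQ
        exact mul_left_cancel₀ (by norm_num) h4
      · rw [Int.odd_iff]; omega
      · rw [Int.odd_iff]; omega
      · rw [Int.odd_iff]; omega
      · apply Subtype.ext
        show raw (-3*s-t, -2*s-z, t-s) = (8*s+z, 4*t, z)
        simp only [raw]
        rw [if_neg (by omega)]
        simp only [Prod.mk.injEq]
        refine ⟨by omega, by omega, by omega⟩

/-! ### The other two bijections -/

lemma card_even (n : ℤ) :
    Nat.card {p : ℤ × ℤ × ℤ // p.1^2 + p.2.1^2 + 3*p.2.2^2 = 8*n+5} =
    Nat.card {p : ℤ × ℤ × ℤ // p.1^2 + p.2.1^2 + 3*p.2.2^2 = 32*n+20 ∧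
      ¬ Odd p.1 ∧ ¬ Odd p.2.1} := by
  have wd : ∀ p : ℤ × ℤ × ℤ, (p.1^2 + p.2.1^2 + 3*p.2.2^2 = 8*n+5) →
      ((2*p.1)^2 + (2*p.2.1)^2 + 3*(2*p.2.2)^2 = 32*n+20 ∧ ¬ Odd (2*p.1) ∧ ¬ Odd (2*p.2.1)) := by
    rintro ⟨X, Y, Z⟩ hQ
    dsimp only at hQ ⊢
    refine ⟨by linear_combination 4*hQ, ?_, ?_⟩ <;> · rw [Int.odd_iff]; omega
  apply Nat.card_eq_of_bijective
    (fun v => ⟨(2*v.1.1, 2*v.1.2.1, 2*v.1.2.2), wd v.1 v.2⟩)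
  constructor
  · rintro ⟨⟨X, Y, Z⟩, hQ⟩ ⟨⟨X', Y', Z'⟩, hQ'⟩ h
    have h' : ((2*X, 2*Y, 2*Z) : ℤ × ℤ × ℤ) = (2*X', 2*Y', 2*Z') := congrArg Subtype.val h
    apply Subtype.ext
    show (X, Y, Z) = (X', Y', Z')
    simp only [Prod.mk.injEq] at h' ⊢
    refine ⟨by omega, by omega, by omega⟩
  · rintro ⟨⟨x, y, z⟩, hQ, hx, hy⟩
    dsimp only at hQ hx hy
    rw [Int.odd_iff] at hx hy
    have hz : z % 2 = 0 := by
      by_contra hz'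
      obtain ⟨a, ha⟩ : ∃ a, x = 2*a := ⟨x/2, by omega⟩
      obtain ⟨b, hb⟩ : ∃ b, y = 2*b := ⟨y/2, by omega⟩
      obtain ⟨c, hc⟩ : ∃ c, z = 2*c+1 := ⟨z/2, by omega⟩
      subst ha hb hc
      have key : 4*(a*a) + 4*(b*b) + 12*(c*c+c) + 3 = 32*n + 20 := by linear_combination hQ
      omega
    obtain ⟨a, ha⟩ : ∃ a, x = 2*a := ⟨x/2, by omega⟩
    obtain ⟨b, hb⟩ : ∃ b, y = 2*b := ⟨y/2, by omega⟩
    obtain ⟨c, hc⟩ : ∃ c, z = 2*c := ⟨z/2, by omega⟩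
    subst ha hb hc
    have hmem : a^2 + b^2 + 3*c^2 = 8*n+5 := by
      have h4 : 4*(a^2 + b^2 + 3*c^2) = 4*(8*n+5) := by linear_combination hQ
      exact mul_left_cancel₀ (by norm_num) h4
    exact ⟨⟨(a, b, c), hmem⟩, Subtype.ext (by show ((2*a, 2*b, 2*c) : ℤ×ℤ×ℤ) = _; rfl)⟩

lemma card_swap (n : ℤ) :
    Nat.card {p : ℤ × ℤ × ℤ // p.1^2 + p.2.1^2 + 3*p.2.2^2 = 32*n+20 ∧
      ¬ Odd p.1 ∧ Odd p.2.1} =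
    Nat.card {p : ℤ × ℤ × ℤ // p.1^2 + p.2.1^2 + 3*p.2.2^2 = 32*n+20 ∧ Odd p.1} := by
  have wd : ∀ p : ℤ × ℤ × ℤ, (p.1^2 + p.2.1^2 + 3*p.2.2^2 = 32*n+20 ∧ ¬ Odd p.1 ∧ Odd p.2.1) →
      ((p.2.1)^2 + (p.1)^2 + 3*(p.2.2)^2 = 32*n+20 ∧ Odd p.2.1) := by
    rintro ⟨X, Y, Z⟩ ⟨hQ, hX, hY⟩
    dsimp only at hQ hX hY ⊢
    exact ⟨by linear_combination hQ, hY⟩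
  apply Nat.card_eq_of_bijective
    (fun v => ⟨(v.1.2.1, v.1.1, v.1.2.2), wd v.1 v.2⟩)
  constructor
  · rintro ⟨⟨X, Y, Z⟩, hm⟩ ⟨⟨X', Y', Z'⟩, hm'⟩ h
    have h' : ((Y, X, Z) : ℤ × ℤ × ℤ) = (Y', X', Z') := congrArg Subtype.val h
    apply Subtype.ext
    show (X, Y, Z) = (X', Y', Z')
    simp only [Prod.mk.injEq] at h' ⊢
    tauto
  · rintro ⟨⟨x, y, z⟩, hQ, hx⟩
    dsimp only at hQ hx
    have hy : ¬ Odd y := by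
      rw [Int.odd_iff] at hx ⊢
      have h4 := (master n x y z hQ hx).2.1
      omega
    refine ⟨⟨(y, x, z), ⟨by dsimp only; linear_combination hQ, hy, hx⟩⟩, Subtype.ext rfl⟩

/-! ### Triangular numbers -/

def iota (s : Bool) (a : ℕ) : ℤ := cond s (-(2*(a:ℤ)+1)) (2*(a:ℤ)+1)

lemma iota_odd (s : Bool) (a : ℕ) : Odd (iota s a) := by
  rw [Int.odd_iff]
  cases s <;> simp only [iota, cond] <;> omega

lemma iota_sq (s : Bool) (a : ℕ) : (iota s a)^2 = (2*(a:ℤ)+1)^2 := by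
  cases s <;> simp only [iota, cond] <;> ring

lemma iota_inj {s s' : Bool} {a a' : ℕ} (h : iota s a = iota s' a') : s = s' ∧ a = a' := by
  cases s <;> cases s' <;> simp only [iota, cond] at h <;>
    refine ⟨by first | rfl | omega, by omega⟩

lemma iota_eq (X : ℤ) (hX : X % 2 = 1) : iota (decide (X < 0)) ((X.natAbs - 1)/2) = X := by
  by_cases h : X < 0
  · rw [decide_eq_true h]; simp only [iota, cond]; omega
  · rw [decide_eq_false h]; simp only [iota, cond]; omega

lemma card_AO (n : ℕ) :
    Nat.card {p : ℤ × ℤ × ℤ // p.1^2 + p.2.1^2 + 3*p.2.2^2 = 8*(n:ℤ)+5 ∧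
      Odd p.1 ∧ Odd p.2.1 ∧ Odd p.2.2} =
    8 * Nat.card {p : ℕ × ℕ × ℕ //
      1 * (p.1 * (p.1 + 1) / 2) + 1 * (p.2.1 * (p.2.1 + 1) / 2)
        + 3 * (p.2.2 * (p.2.2 + 1) / 2) = n} := by
  have wd : ∀ (s : Bool × Bool × Bool) (q : ℕ × ℕ × ℕ),
      (1 * (q.1 * (q.1 + 1) / 2) + 1 * (q.2.1 * (q.2.1 + 1) / 2)
        + 3 * (q.2.2 * (q.2.2 + 1) / 2) = n) →
      ((iota s.1 q.1)^2 + (iota s.2.1 q.2.1)^2 + 3*(iota s.2.2 q.2.2)^2 = 8*(n:ℤ)+5 ∧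
        Odd (iota s.1 q.1) ∧ Odd (iota s.2.1 q.2.1) ∧ Odd (iota s.2.2 q.2.2)) := by
    rintro ⟨s1, s2, s3⟩ ⟨a, b, c⟩ ht
    dsimp only at ht ⊢
    refine ⟨?_, iota_odd _ _, iota_odd _ _, iota_odd _ _⟩
    rw [iota_sq, iota_sq, iota_sq]
    have e1 := Nat.even_mul_succ_self a
    have e2 := Nat.even_mul_succ_self b
    have e3 := Nat.even_mul_succ_self c
    rw [Nat.even_iff] at e1 e2 e3
    have hNat : 4*(a*(a+1)) + 4*(b*(b+1)) + 12*(c*(c+1)) = 8*n := by omega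
    have hInt : 4*((a:ℤ)*(a+1)) + 4*((b:ℤ)*(b+1)) + 12*((c:ℤ)*(c+1)) = 8*(n:ℤ) := by
      exact_mod_cast hNat
    linear_combination hInt
  apply (Nat.card_eq_of_bijective
    (fun v : (Bool × Bool × Bool) ×
        {p : ℕ × ℕ × ℕ // 1 * (p.1 * (p.1 + 1) / 2) + 1 * (p.2.1 * (p.2.1 + 1) / 2)
          + 3 * (p.2.2 * (p.2.2 + 1) / 2) = n} =>
      (⟨(iota v.1.1 v.2.1.1, iota v.1.2.1 v.2.1.2.1, iota v.1.2.2 v.2.1.2.2), wd v.1 v.2.1 v.2.2⟩ :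
        {p : ℤ × ℤ × ℤ // p.1^2 + p.2.1^2 + 3*p.2.2^2 = 8*(n:ℤ)+5 ∧
          Odd p.1 ∧ Odd p.2.1 ∧ Odd p.2.2}))
    ⟨?_, ?_⟩).symm.trans (by rw [Nat.card_prod]; norm_num [Nat.card_eq_fintype_card])
  · rintro ⟨⟨s1, s2, s3⟩, ⟨⟨a, b, c⟩, ht⟩⟩ ⟨⟨s1', s2', s3'⟩, ⟨⟨a', b', c'⟩, ht'⟩⟩ h
    have h' := congrArg Subtype.val h
    simp only [Prod.mk.injEq] at h'
    obtain ⟨h1, h2, h3⟩ := h'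
    obtain ⟨hs1, ha⟩ := iota_inj h1
    obtain ⟨hs2, hb⟩ := iota_inj h2
    obtain ⟨hs3, hc⟩ := iota_inj h3
    subst hs1 hs2 hs3 ha hb hc
    rfl
  · rintro ⟨⟨X, Y, Z⟩, hQ, hX, hY, hZ⟩
    dsimp only at hQ hX hY hZ
    rw [Int.odd_iff] at hX hY hZ
    set a := (X.natAbs - 1)/2 with hadef
    set b := (Y.natAbs - 1)/2 with hbdef
    set c := (Z.natAbs - 1)/2 with hcdef
    have eX := iota_eq X hX
    have eY := iota_eq Y hY
    have eZ := iota_eq Z hZ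
    have hX2 : X^2 = (2*(a:ℤ)+1)^2 := by rw [← eX, iota_sq]
    have hY2 : Y^2 = (2*(b:ℤ)+1)^2 := by rw [← eY, iota_sq]
    have hZ2 : Z^2 = (2*(c:ℤ)+1)^2 := by rw [← eZ, iota_sq]
    have hInt : 4*((a:ℤ)*(a+1)) + 4*((b:ℤ)*(b+1)) + 12*((c:ℤ)*(c+1)) = 8*(n:ℤ) := by
      linear_combination hQ - hX2 - hY2 - 3*hZ2
    have hNat : 4*(a*(a+1)) + 4*(b*(b+1)) + 12*(c*(c+1)) = 8*n := by exact_mod_cast hInt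
    have e1 := Nat.even_mul_succ_self a
    have e2 := Nat.even_mul_succ_self b
    have e3 := Nat.even_mul_succ_self c
    rw [Nat.even_iff] at e1 e2 e3
    have ht : 1 * (a * (a + 1) / 2) + 1 * (b * (b + 1) / 2) + 3 * (c * (c + 1) / 2) = n := by
      omega
    refine ⟨⟨(decide (X < 0), decide (Y < 0), decide (Z < 0)), ⟨(a, b, c), ht⟩⟩, ?_⟩
    apply Subtype.ext
    show (iota _ a, iota _ b, iota _ c) = (X, Y, Z)
    rw [eX, eY, eZ]

/-! ### Assembly -/

lemma N_eq (k : ℕ) (K : ℤ) (hK : (k:ℤ) = K) :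
    N 1 1 3 k = Nat.card {p : ℤ × ℤ × ℤ // p.1^2 + p.2.1^2 + 3*p.2.2^2 = K} := by
  apply Nat.card_congr
  apply Equiv.subtypeEquivRight
  intro p
  subst hK
  push_cast
  constructor <;> intro h <;> linarith

lemma main_count (n : ℕ) :
    N 1 1 3 (4*(8*n+5)) = N 1 1 3 (8*n+5) + 16 * T 1 1 3 n := by
  have hT : T 1 1 3 n = Nat.card {p : ℕ × ℕ × ℕ //
      1 * (p.1 * (p.1 + 1) / 2) + 1 * (p.2.1 * (p.2.1 + 1) / 2)
        + 3 * (p.2.2 * (p.2.2 + 1) / 2) = n} := rfl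
  have h4m : N 1 1 3 (4*(8*n+5)) =
      Nat.card {p : ℤ × ℤ × ℤ // p.1^2 + p.2.1^2 + 3*p.2.2^2 = 32*(n:ℤ)+20} :=
    N_eq _ _ (by push_cast; ring)
  have hm : N 1 1 3 (8*n+5) =
      Nat.card {p : ℤ × ℤ × ℤ // p.1^2 + p.2.1^2 + 3*p.2.2^2 = 8*(n:ℤ)+5} :=
    N_eq _ _ (by push_cast; ring)
  haveI F0 := finite_sol (32*(n:ℤ)+20)
  haveI F1 : Finite {p : ℤ × ℤ × ℤ //
      p.1^2 + p.2.1^2 + 3*p.2.2^2 = 32*(n:ℤ)+20 ∧ ¬ Odd p.1} :=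
    fin_sub F0 (fun a h => h.1)
  have split1 := card_split
    (fun p : ℤ × ℤ × ℤ => p.1^2 + p.2.1^2 + 3*p.2.2^2 = 32*(n:ℤ)+20)
    (fun p => Odd p.1)
  have split2 := card_split
    (fun p : ℤ × ℤ × ℤ => p.1^2 + p.2.1^2 + 3*p.2.2^2 = 32*(n:ℤ)+20 ∧ ¬ Odd p.1)
    (fun p => Odd p.2.1)
  have assoc1 : Nat.card {p : ℤ × ℤ × ℤ //
      (p.1^2 + p.2.1^2 + 3*p.2.2^2 = 32*(n:ℤ)+20 ∧ ¬ Odd p.1) ∧ Odd p.2.1} =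
      Nat.card {p : ℤ × ℤ × ℤ //
      p.1^2 + p.2.1^2 + 3*p.2.2^2 = 32*(n:ℤ)+20 ∧ ¬ Odd p.1 ∧ Odd p.2.1} :=
    Nat.card_congr (Equiv.subtypeEquivRight (fun p => and_assoc))
  have assoc2 : Nat.card {p : ℤ × ℤ × ℤ //
      (p.1^2 + p.2.1^2 + 3*p.2.2^2 = 32*(n:ℤ)+20 ∧ ¬ Odd p.1) ∧ ¬ Odd p.2.1} =
      Nat.card {p : ℤ × ℤ × ℤ //
      p.1^2 + p.2.1^2 + 3*p.2.2^2 = 32*(n:ℤ)+20 ∧ ¬ Odd p.1 ∧ ¬ Odd p.2.1} :=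
    Nat.card_congr (Equiv.subtypeEquivRight (fun p => and_assoc))
  have hS1 := card_S1 (n:ℤ)
  have hAO := card_AO n
  have hswap := card_swap (n:ℤ)
  have heven := card_even (n:ℤ)
  rw [h4m, hm, hT]
  omega

theorem stmt_0 (n : ℕ) (hn : 0 < n) :
    (16 * T 1 1 3 n : ℤ) = (N 1 1 3 (4 * (8 * n + 5)) : ℤ) - (N 1 1 3 (8 * n + 5) : ℤ) := by
  have h := main_count n
  push_cast [h]
  ring
end

section
/- For every positive integer n, 16·T(1,1,4;n) = N(1,1,4;4(8n+6)) − N(1,1,4;8n+6). -/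
set_option linter.unnecessarySeqFocus false


lemma sq_form (x : ℤ) : ∃ s : ℤ,
    (x^2 = 8*s+1 ∧ Odd x) ∨ (x^2 = 8*s ∧ Even x) ∨ (x^2 = 8*s+4 ∧ Even x) := by
  rcases Int.even_or_odd x with ⟨a, rfl⟩ | ⟨a, rfl⟩
  · rcases Int.even_or_odd a with ⟨b, rfl⟩ | ⟨b, rfl⟩
    · exact ⟨2*b^2, Or.inr (Or.inl ⟨by ring, ⟨b+b, by ring⟩⟩)⟩
    · exact ⟨2*b^2+2*b, Or.inr (Or.inr ⟨by ring, ⟨2*b+1, by ring⟩⟩)⟩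
  · obtain ⟨s, hs⟩ := Int.even_mul_succ_self a
    exact ⟨s, Or.inl ⟨by linear_combination 4*hs, ⟨a, rfl⟩⟩⟩

lemma key6 {m x y z : ℤ} (h : x^2 + y^2 + 4*z^2 = 8*m+6) :
    Odd x ∧ Odd y ∧ Odd z := by
  obtain ⟨s1, h1⟩ := sq_form x
  obtain ⟨s2, h2⟩ := sq_form y
  obtain ⟨s3, h3⟩ := sq_form z
  rcases h1 with ⟨e1, o1⟩ | ⟨e1, o1⟩ | ⟨e1, o1⟩ <;>
  rcases h2 with ⟨e2, o2⟩ | ⟨e2, o2⟩ | ⟨e2, o2⟩ <;>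
  rcases h3 with ⟨e3, o3⟩ | ⟨e3, o3⟩ | ⟨e3, o3⟩ <;>
    rw [e1, e2, e3] at h <;>
    first
      | exact ⟨o1, o2, o3⟩
      | omega

lemma keyEven {m x y z : ℤ} (h : x^2 + y^2 + 4*z^2 = 8*m) :
    Even x ∧ Even y := by
  obtain ⟨s1, h1⟩ := sq_form x
  obtain ⟨s2, h2⟩ := sq_form y
  obtain ⟨s3, h3⟩ := sq_form z
  rcases h1 with ⟨e1, o1⟩ | ⟨e1, o1⟩ | ⟨e1, o1⟩ <;>
  rcases h2 with ⟨e2, o2⟩ | ⟨e2, o2⟩ | ⟨e2, o2⟩ <;>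
  rcases h3 with ⟨e3, o3⟩ | ⟨e3, o3⟩ | ⟨e3, o3⟩ <;>
    rw [e1, e2, e3] at h <;>
    first
      | exact ⟨o1, o2⟩
      | omega

lemma key3 {m u v w : ℤ} (h : u^2 + v^2 + w^2 = 8*m+6) :
    Even u ∨ Even v ∨ Even w := by
  obtain ⟨s1, h1⟩ := sq_form u
  obtain ⟨s2, h2⟩ := sq_form v
  obtain ⟨s3, h3⟩ := sq_form w
  rcases h1 with ⟨e1, o1⟩ | ⟨e1, o1⟩ | ⟨e1, o1⟩ <;>
  rcases h2 with ⟨e2, o2⟩ | ⟨e2, o2⟩ | ⟨e2, o2⟩ <;>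
  rcases h3 with ⟨e3, o3⟩ | ⟨e3, o3⟩ | ⟨e3, o3⟩ <;>
    rw [e1, e2, e3] at h <;>
    first
      | exact Or.inl o1
      | exact Or.inr (Or.inl o2)
      | exact Or.inr (Or.inr o3)
      | omega


def sg (s : Bool) (a : ℕ) : ℤ := if s then 2*a+1 else -(2*a+1)

lemma sg_sq (s : Bool) (a : ℕ) : (sg s a)^2 = (2*(a:ℤ)+1)^2 := by
  cases s <;> simp [sg] <;> ring

lemma sg_inj {s t : Bool} {a b : ℕ} (h : sg s a = sg t b) : s = t ∧ a = b := by
  cases s <;> cases t <;> simp [sg] at h ⊢ <;> omega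

lemma sg_surj {x : ℤ} (h : Odd x) : ∃ s a, sg s a = x := by
  obtain ⟨k, rfl⟩ := h
  rcases le_or_gt 0 k with hk | hk
  · exact ⟨true, k.toNat, by simp [sg]; omega⟩
  · exact ⟨false, (-k-1).toNat, by simp [sg]; omega⟩

lemma tri_to_sq {n a b c : ℕ} (h : a*(a+1)/2 + b*(b+1)/2 + 4*(c*(c+1)/2) = n) :
    (2*(a:ℤ)+1)^2 + (2*(b:ℤ)+1)^2 + 4*(2*(c:ℤ)+1)^2 = 8*(n:ℤ)+6 := by
  obtain ⟨p, hp⟩ := Nat.even_mul_succ_self a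
  obtain ⟨q, hq⟩ := Nat.even_mul_succ_self b
  obtain ⟨r, hr⟩ := Nat.even_mul_succ_self c
  rw [hp, hq, hr] at h
  have hn : p + q + 4*r = n := by omega
  have hpz : (a:ℤ)*((a:ℤ)+1) = (p:ℤ)+(p:ℤ) := by exact_mod_cast congrArg (Nat.cast : ℕ → ℤ) hp
  have hqz : (b:ℤ)*((b:ℤ)+1) = (q:ℤ)+(q:ℤ) := by exact_mod_cast congrArg (Nat.cast : ℕ → ℤ) hq
  have hrz : (c:ℤ)*((c:ℤ)+1) = (r:ℤ)+(r:ℤ) := by exact_mod_cast congrArg (Nat.cast : ℕ → ℤ) hr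
  have hnz : (p:ℤ) + (q:ℤ) + 4*(r:ℤ) = (n:ℤ) := by exact_mod_cast hn
  linear_combination 8*hnz + 4*hpz + 4*hqz + 16*hrz

lemma sq_to_tri {n a b c : ℕ}
    (h : (2*(a:ℤ)+1)^2 + (2*(b:ℤ)+1)^2 + 4*(2*(c:ℤ)+1)^2 = 8*(n:ℤ)+6) :
    a*(a+1)/2 + b*(b+1)/2 + 4*(c*(c+1)/2) = n := by
  obtain ⟨p, hp⟩ := Nat.even_mul_succ_self a
  obtain ⟨q, hq⟩ := Nat.even_mul_succ_self b
  obtain ⟨r, hr⟩ := Nat.even_mul_succ_self c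
  have hpz : (a:ℤ)*((a:ℤ)+1) = (p:ℤ)+(p:ℤ) := by exact_mod_cast congrArg (Nat.cast : ℕ → ℤ) hp
  have hqz : (b:ℤ)*((b:ℤ)+1) = (q:ℤ)+(q:ℤ) := by exact_mod_cast congrArg (Nat.cast : ℕ → ℤ) hq
  have hrz : (c:ℤ)*((c:ℤ)+1) = (r:ℤ)+(r:ℤ) := by exact_mod_cast congrArg (Nat.cast : ℕ → ℤ) hr
  have h8 : 8*((p:ℤ) + (q:ℤ) + 4*(r:ℤ)) = 8*(n:ℤ) := by
    linear_combination h - 4*hpz - 4*hqz - 16*hrz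
  have hn : p + q + 4*r = n := by omega
  rw [hp, hq, hr]
  omega

def Sset (m : ℕ) := {p : ℤ × ℤ × ℤ // p.1^2 + p.2.1^2 + 4*p.2.2^2 = (m:ℤ)}
def Rset (n : ℕ) := {p : ℤ × ℤ × ℤ // p.1^2 + p.2.1^2 + p.2.2^2 = 8*(n:ℤ)+6}
def Tn (n : ℕ) := {p : ℕ × ℕ × ℕ // p.1*(p.1+1)/2 + p.2.1*(p.2.1+1)/2 + 4*(p.2.2*(p.2.2+1)/2) = n}

lemma cardS6 (n : ℕ) : Nat.card (Sset (8*n+6)) = 8 * Nat.card (Tn n) := by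
  have hmem : ∀ x : (Bool × Bool × Bool) × Tn n,
      (sg x.1.1 x.2.1.1)^2 + (sg x.1.2.1 x.2.1.2.1)^2 + 4*(sg x.1.2.2 x.2.1.2.2)^2
        = ((8*n+6 : ℕ) : ℤ) := by
    rintro ⟨⟨s,t,u⟩, ⟨⟨a,b,c⟩, hx⟩⟩
    rw [sg_sq, sg_sq, sg_sq]
    push_cast
    have := tri_to_sq hx
    linarith
  have hf : Function.Bijective (fun x : (Bool × Bool × Bool) × Tn n =>
      (⟨(sg x.1.1 x.2.1.1, sg x.1.2.1 x.2.1.2.1, sg x.1.2.2 x.2.1.2.2), hmem x⟩ :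
        Sset (8*n+6))) := by
    constructor
    · rintro ⟨⟨s,t,u⟩, ⟨⟨a,b,c⟩, h⟩⟩ ⟨⟨s',t',u'⟩, ⟨⟨a',b',c'⟩, h'⟩⟩ he
      simp only [Subtype.mk.injEq, Prod.mk.injEq] at he
      obtain ⟨h1, h2, h3⟩ := he
      obtain ⟨e1, e2⟩ := sg_inj h1
      obtain ⟨e3, e4⟩ := sg_inj h2
      obtain ⟨e5, e6⟩ := sg_inj h3
      subst e1; subst e2; subst e3; subst e4; subst e5; subst e6; rfl
    · rintro ⟨⟨x,y,z⟩, h⟩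
      have h' : x^2 + y^2 + 4*z^2 = 8*(n:ℤ)+6 := by push_cast at h; linarith
      obtain ⟨ox, oy, oz⟩ := key6 h'
      obtain ⟨s, a, rfl⟩ := sg_surj ox
      obtain ⟨t, b, rfl⟩ := sg_surj oy
      obtain ⟨u, c, rfl⟩ := sg_surj oz
      rw [sg_sq, sg_sq, sg_sq] at h'
      exact ⟨⟨(s,t,u), ⟨(a,b,c), sq_to_tri h'⟩⟩, rfl⟩
  calc Nat.card (Sset (8*n+6)) = Nat.card ((Bool × Bool × Bool) × Tn n) :=
        (Nat.card_congr (Equiv.ofBijective _ hf)).symm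
    _ = 8 * Nat.card (Tn n) := by
        simp [Nat.card_prod, Nat.card_eq_fintype_card]

lemma cardS24 (n : ℕ) : Nat.card (Sset (4*(8*n+6))) = Nat.card (Rset n) := by
  have hmem : ∀ x : Rset n,
      (2*x.1.1)^2 + (2*x.1.2.1)^2 + 4*x.1.2.2^2 = ((4*(8*n+6) : ℕ) : ℤ) := by
    rintro ⟨⟨u,v,w⟩, h⟩
    push_cast
    linarith
  have hf : Function.Bijective (fun x : Rset n =>
      (⟨(2*x.1.1, 2*x.1.2.1, x.1.2.2), hmem x⟩ : Sset (4*(8*n+6)))) := by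
    constructor
    · rintro ⟨⟨u,v,w⟩, h⟩ ⟨⟨u',v',w'⟩, h'⟩ he
      simp only [Subtype.mk.injEq, Prod.mk.injEq] at he
      apply Subtype.ext
      simp only [Prod.mk.injEq]
      omega
    · rintro ⟨⟨x,y,z⟩, h⟩
      have h' : x^2 + y^2 + 4*z^2 = 8*(4*(n:ℤ)+3) := by push_cast at h; linarith
      obtain ⟨hx, hy⟩ := keyEven h'
      obtain ⟨u, rfl⟩ := hx
      obtain ⟨v, rfl⟩ := hy
      have hm4 : 4*(u^2 + v^2 + z^2) = 4*(8*(n:ℤ)+6) := by linear_combination h'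
      have hm : u^2 + v^2 + z^2 = 8*(n:ℤ)+6 := by linarith
      exact ⟨⟨(u,v,z), hm⟩, by apply Subtype.ext; simp only [Prod.mk.injEq]; refine ⟨by ring, by ring, trivial⟩⟩
  exact (Nat.card_congr (Equiv.ofBijective _ hf)).symm

def tri3 (i : Fin 3) (p : ℤ × ℤ × ℤ) : ℤ × ℤ × ℤ :=
  if i = 0 then (p.1, p.2.1, 2*p.2.2)
  else if i = 1 then (p.1, 2*p.2.2, p.2.1)
  else (2*p.2.2, p.1, p.2.1)

lemma cardR (n : ℕ) : Nat.card (Rset n) = 3 * Nat.card (Sset (8*n+6)) := by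
  have hmem : ∀ x : Fin 3 × Sset (8*n+6),
      (tri3 x.1 x.2.1).1^2 + (tri3 x.1 x.2.1).2.1^2 + (tri3 x.1 x.2.1).2.2^2
        = 8*(n:ℤ)+6 := by
    rintro ⟨i, ⟨⟨x,y,z⟩, h⟩⟩
    push_cast at h
    fin_cases i <;> simp [tri3] <;> linarith
  have hf : Function.Bijective (fun x : Fin 3 × Sset (8*n+6) =>
      (⟨tri3 x.1 x.2.1, hmem x⟩ : Rset n)) := by
    constructor
    · rintro ⟨i, ⟨⟨x,y,z⟩, h⟩⟩ ⟨j, ⟨⟨x',y',z'⟩, h'⟩⟩ he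
      simp only [Subtype.mk.injEq] at he
      have h1 : x^2 + y^2 + 4*z^2 = 8*(n:ℤ)+6 := by push_cast at h; linarith
      have h2 : x'^2 + y'^2 + 4*z'^2 = 8*(n:ℤ)+6 := by push_cast at h'; linarith
      obtain ⟨⟨k1, rfl⟩, ⟨k2, rfl⟩, ⟨k3, rfl⟩⟩ := key6 h1
      obtain ⟨⟨l1, rfl⟩, ⟨l2, rfl⟩, ⟨l3, rfl⟩⟩ := key6 h2
      fin_cases i <;> fin_cases j <;>
        simp_all [tri3, Prod.ext_iff, Subtype.ext_iff] <;> omega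
    · rintro ⟨⟨u,v,w⟩, h⟩
      rcases key3 h with ⟨c, rfl⟩ | ⟨c, rfl⟩ | ⟨c, rfl⟩ <;> dsimp only at h
      · -- u even : i = 2, p = (v, w, c)
        have hm : v^2 + w^2 + 4*c^2 = ((8*n+6 : ℕ) : ℤ) := by push_cast; linear_combination h
        exact ⟨⟨2, ⟨(v,w,c), hm⟩⟩, by
          apply Subtype.ext; simp [tri3, Prod.ext_iff]; ring⟩
      · -- v even : i = 1, p = (u, w, c)
        have hm : u^2 + w^2 + 4*c^2 = ((8*n+6 : ℕ) : ℤ) := by push_cast; linear_combination h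
        exact ⟨⟨1, ⟨(u,w,c), hm⟩⟩, by
          apply Subtype.ext; simp [tri3, Prod.ext_iff]; ring⟩
      · -- w even : i = 0, p = (u, v, c)
        have hm : u^2 + v^2 + 4*c^2 = ((8*n+6 : ℕ) : ℤ) := by push_cast; linear_combination h
        exact ⟨⟨0, ⟨(u,v,c), hm⟩⟩, by
          apply Subtype.ext; simp [tri3, Prod.ext_iff]; ring⟩
  calc Nat.card (Rset n) = Nat.card (Fin 3 × Sset (8*n+6)) :=
        (Nat.card_congr (Equiv.ofBijective _ hf)).symm
    _ = 3 * Nat.card (Sset (8*n+6)) := by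
        simp [Nat.card_prod, Nat.card_eq_fintype_card]

lemma N_eq_s1 (m : ℕ) : N 1 1 4 m = Nat.card (Sset m) := by
  unfold N Sset
  exact Nat.card_congr (Equiv.subtypeEquivRight (fun p => by push_cast; constructor <;> intro h <;> linarith))

lemma T_eq (n : ℕ) : T 1 1 4 n = Nat.card (Tn n) := by
  unfold T Tn
  exact Nat.card_congr (Equiv.subtypeEquivRight (fun p => by simp only [one_mul]))

theorem stmt_1 (n : ℕ) (hn : 0 < n) :
    (16 * T 1 1 4 n : ℤ) = (N 1 1 4 (4 * (8 * n + 6)) : ℤ) - (N 1 1 4 (8 * n + 6) : ℤ) := by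
  have h1 : N 1 1 4 (8*n+6) = 8 * T 1 1 4 n := by
    rw [N_eq_s1, T_eq, cardS6]
  have h2 : N 1 1 4 (4*(8*n+6)) = 24 * T 1 1 4 n := by
    rw [N_eq_s1, T_eq, cardS24, cardR, cardS6]
    ring
  rw [h1, h2]
  push_cast
  ring
end

section
/- For every positive integer n, 16·T(1,2,2;n) = N(1,2,2;4(8n+5)) − N(1,2,2;8n+5). -/
def sol122 (M : ℤ) : Set (ℤ × ℤ × ℤ) := {p | p.1 ^ 2 + 2 * p.2.1 ^ 2 + 2 * p.2.2 ^ 2 = M}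
def sol211 (M : ℤ) : Set (ℤ × ℤ × ℤ) := {p | 2 * p.1 ^ 2 + p.2.1 ^ 2 + p.2.2 ^ 2 = M}
def sol111 (M : ℤ) : Set (ℤ × ℤ × ℤ) := {p | p.1 ^ 2 + p.2.1 ^ 2 + p.2.2 ^ 2 = M}

lemma bnd (x M : ℤ) (h : x ^ 2 ≤ M) : -(M + 1) ≤ x ∧ x ≤ M + 1 := by
  constructor <;> nlinarith [sq_nonneg (x - 1), sq_nonneg (x + 1), sq_nonneg x]

lemma finite_sols {S : Set (ℤ × ℤ × ℤ)} (M : ℤ)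
    (h : ∀ p ∈ S, p.1 ^ 2 ≤ M ∧ p.2.1 ^ 2 ≤ M ∧ p.2.2 ^ 2 ≤ M) : S.Finite := by
  apply Set.Finite.subset
    ((Set.finite_Icc (-(M + 1)) (M + 1)).prod
      ((Set.finite_Icc (-(M + 1)) (M + 1)).prod (Set.finite_Icc (-(M + 1)) (M + 1))))
  intro p hp
  obtain ⟨h1, h2, h3⟩ := h p hp
  have b1 := bnd _ _ h1
  have b2 := bnd _ _ h2
  have b3 := bnd _ _ h3
  simp only [Set.mem_prod, Set.mem_Icc]
  exact ⟨⟨b1.1, b1.2⟩, ⟨b2.1, b2.2⟩, ⟨b3.1, b3.2⟩⟩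

lemma fin122 (M : ℤ) : (sol122 M).Finite := by
  apply finite_sols M
  rintro ⟨x, y, z⟩ h
  simp only [sol122, Set.mem_setOf_eq] at h
  refine ⟨?_, ?_, ?_⟩ <;> nlinarith [sq_nonneg x, sq_nonneg y, sq_nonneg z]

lemma fin211 (M : ℤ) : (sol211 M).Finite := by
  apply finite_sols M
  rintro ⟨x, y, z⟩ h
  simp only [sol211, Set.mem_setOf_eq] at h
  refine ⟨?_, ?_, ?_⟩ <;> nlinarith [sq_nonneg x, sq_nonneg y, sq_nonneg z]

lemma fin111 (M : ℤ) : (sol111 M).Finite := by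
  apply finite_sols M
  rintro ⟨x, y, z⟩ h
  simp only [sol111, Set.mem_setOf_eq] at h
  refine ⟨?_, ?_, ?_⟩ <;> nlinarith [sq_nonneg x, sq_nonneg y, sq_nonneg z]

lemma inj1 : Function.Injective (fun p : ℤ × ℤ × ℤ => (2 * p.1, p.2.1, p.2.2)) := by
  rintro ⟨a, b, c⟩ ⟨d, e, f⟩ h
  simp only [Prod.mk.injEq] at h ⊢
  omega

lemma inj2 : Function.Injective (fun p : ℤ × ℤ × ℤ => (p.1, 2 * p.2.1, 2 * p.2.2)) := by
  rintro ⟨a, b, c⟩ ⟨d, e, f⟩ h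
  simp only [Prod.mk.injEq] at h ⊢
  omega

lemma inj3 : Function.Injective
    (fun p : ℤ × ℤ × ℤ => (p.1, p.2.1 + p.2.2, p.2.1 - p.2.2)) := by
  rintro ⟨a, b, c⟩ ⟨d, e, f⟩ h
  simp only [Prod.mk.injEq] at h ⊢
  omega

lemma injs12 : Function.Injective (fun p : ℤ × ℤ × ℤ => (p.2.1, p.1, p.2.2)) := by
  rintro ⟨a, b, c⟩ ⟨d, e, f⟩ h
  simp only [Prod.mk.injEq] at h ⊢
  omega

lemma injs13 : Function.Injective (fun p : ℤ × ℤ × ℤ => (p.2.2, p.2.1, p.1)) := by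
  rintro ⟨a, b, c⟩ ⟨d, e, f⟩ h
  simp only [Prod.mk.injEq] at h ⊢
  omega

-- encoding odd integers
def enc (b : Bool) (k : ℕ) : ℤ := if b then -(2 * (k : ℤ) + 1) else 2 * (k : ℤ) + 1

lemma enc_sq (b : Bool) (k : ℕ) : (enc b k) ^ 2 = (2 * (k : ℤ) + 1) ^ 2 := by
  cases b <;> simp [enc] <;> ring

lemma enc_inj {b b' : Bool} {k k' : ℕ} (h : enc b k = enc b' k') : b = b' ∧ k = k' := by
  cases b <;> cases b' <;> simp [enc] at h ⊢ <;> omega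

lemma odd_enc (x : ℤ) (h : x % 2 = 1) : ∃ b k, x = enc b k := by
  rcases lt_or_ge x 0 with hx | hx
  · refine ⟨true, ((-x - 1) / 2).toNat, ?_⟩
    simp only [enc, if_true]  -- ok
    rw [Int.toNat_of_nonneg (by omega : (0:ℤ) ≤ (-x - 1) / 2)]
    omega
  · refine ⟨false, ((x - 1) / 2).toNat, ?_⟩
    simp only [enc, Bool.false_eq_true, if_false]
    rw [Int.toNat_of_nonneg (by omega : (0:ℤ) ≤ (x - 1) / 2)]
    omega

lemma tri (p : ℕ) : (p : ℤ) ^ 2 + p = 2 * ((p * (p + 1) / 2 : ℕ) : ℤ) := by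
  have h : p * (p + 1) / 2 * 2 = p * (p + 1) := Nat.div_mul_cancel (Nat.even_mul_succ_self p).two_dvd
  have h2 : ((p * (p + 1) / 2 : ℕ) : ℤ) * 2 = (p : ℤ) * ((p : ℤ) + 1) := by
    exact_mod_cast congrArg (Nat.cast : ℕ → ℤ) h
  linear_combination -h2


lemma sq8 (x : ℤ) :
    (x % 2 = 1 ∧ x ^ 2 % 8 = 1) ∨ (x % 2 = 0 ∧ (x ^ 2 % 8 = 0 ∨ x ^ 2 % 8 = 4)) := by
  obtain ⟨q, r, hr0, hr4, hx⟩ : ∃ q r, 0 ≤ r ∧ r < 4 ∧ x = 4 * q + r :=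
    ⟨x / 4, x % 4, Int.emod_nonneg x (by norm_num), Int.emod_lt_of_pos x (by norm_num),
      by rw [Int.mul_ediv_add_emod]⟩
  subst hx
  interval_cases r
  · have e : (4 * q + 0) ^ 2 = 8 * (2 * q ^ 2) := by ring
    omega
  · have e : (4 * q + 1) ^ 2 = 8 * (2 * q ^ 2 + q) + 1 := by ring
    omega
  · have e : (4 * q + 2) ^ 2 = 8 * (2 * q ^ 2 + 2 * q) + 4 := by ring
    omega
  · have e : (4 * q + 3) ^ 2 = 8 * (2 * q ^ 2 + 3 * q + 1) + 1 := by ring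
    omega


section steps
variable (n : ℕ)

-- L1
lemma L1 : sol122 (4 * (8 * (n:ℤ) + 5)) =
    (fun p : ℤ × ℤ × ℤ => (2 * p.1, p.2.1, p.2.2)) '' sol211 (2 * (8 * (n:ℤ) + 5)) := by
  ext ⟨x, y, z⟩
  simp only [sol122, sol211, Set.mem_setOf_eq, Set.mem_image, Prod.mk.injEq, Prod.exists]
  constructor
  · intro h
    have hx : x % 2 = 0 := by
      rcases sq8 x with ⟨h1, h2⟩ | ⟨h1, h2⟩
      · rcases sq8 y with ⟨_, h3⟩ | ⟨_, h3 | h3⟩ <;>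
          rcases sq8 z with ⟨_, h4⟩ | ⟨_, h4 | h4⟩ <;> omega
      · exact h1
    obtain ⟨a, rfl⟩ : ∃ a, x = 2 * a := ⟨x / 2, by omega⟩
    exact ⟨a, y, z, by linarith [h], rfl, rfl, rfl⟩
  · rintro ⟨a, b, c, h, rfl, rfl, rfl⟩
    ring_nf; ring_nf at h; linarith

-- L2 splitting of sol211(2m) by parity of y (z has same parity)
lemma L2 : sol211 (2 * (8 * (n:ℤ) + 5)) =
    (sol211 (2 * (8 * (n:ℤ) + 5)) ∩ {p | p.2.1 % 2 = 0 ∧ p.2.2 % 2 = 0}) ∪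
    (sol211 (2 * (8 * (n:ℤ) + 5)) ∩ {p | p.2.1 % 2 = 1 ∧ p.2.2 % 2 = 1}) := by
  ext ⟨a, y, z⟩
  simp only [sol211, Set.mem_setOf_eq, Set.mem_union, Set.mem_inter_iff]
  constructor
  · intro h
    rcases sq8 a with ⟨h1, h2⟩ | ⟨h1, h2 | h2⟩ <;>
      rcases sq8 y with ⟨h3, h4⟩ | ⟨h3, h4 | h4⟩ <;>
        rcases sq8 z with ⟨h5, h6⟩ | ⟨h5, h6 | h6⟩ <;> omega
  · tauto

lemma L2disj : Disjoint
    (sol211 (2 * (8 * (n:ℤ) + 5)) ∩ {p | p.2.1 % 2 = 0 ∧ p.2.2 % 2 = 0})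
    (sol211 (2 * (8 * (n:ℤ) + 5)) ∩ {p | p.2.1 % 2 = 1 ∧ p.2.2 % 2 = 1}) := by
  rw [Set.disjoint_left]
  rintro p ⟨-, h1, -⟩ ⟨-, h2, -⟩
  omega

-- L3 : even-even part ≅ sol122 m
lemma L3 : sol211 (2 * (8 * (n:ℤ) + 5)) ∩ {p | p.2.1 % 2 = 0 ∧ p.2.2 % 2 = 0} =
    (fun p : ℤ × ℤ × ℤ => (p.1, 2 * p.2.1, 2 * p.2.2)) '' sol122 (8 * (n:ℤ) + 5) := by
  ext ⟨a, y, z⟩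
  simp only [sol211, sol122, Set.mem_setOf_eq, Set.mem_inter_iff, Set.mem_image,
    Prod.mk.injEq, Prod.exists]
  constructor
  · rintro ⟨h, hy, hz⟩
    obtain ⟨b, rfl⟩ : ∃ b, y = 2 * b := ⟨y / 2, by omega⟩
    obtain ⟨c, rfl⟩ : ∃ c, z = 2 * c := ⟨z / 2, by omega⟩
    exact ⟨a, b, c, by linarith [h], rfl, rfl, rfl⟩
  · rintro ⟨x, b, c, h, rfl, rfl, rfl⟩
    refine ⟨by linarith [h], by omega, by omega⟩

-- L4 : odd-odd part ≅ {p ∈ sol111 m, p.1 even}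
lemma L4 : sol211 (2 * (8 * (n:ℤ) + 5)) ∩ {p | p.2.1 % 2 = 1 ∧ p.2.2 % 2 = 1} =
    (fun p : ℤ × ℤ × ℤ => (p.1, p.2.1 + p.2.2, p.2.1 - p.2.2)) ''
      (sol111 (8 * (n:ℤ) + 5) ∩ {p | p.1 % 2 = 0}) := by
  ext ⟨a, y, z⟩
  simp only [sol211, sol111, Set.mem_setOf_eq, Set.mem_inter_iff, Set.mem_image,
    Prod.mk.injEq, Prod.exists]
  constructor
  · rintro ⟨h, hy, hz⟩
    obtain ⟨u, hu⟩ : ∃ u, y + z = 2 * u := ⟨(y + z) / 2, by omega⟩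
    obtain ⟨v, hv⟩ : ∃ v, y - z = 2 * v := ⟨(y - z) / 2, by omega⟩
    have hy' : y = u + v := by omega
    have hz' : z = u - v := by omega
    have hm : a ^ 2 + u ^ 2 + v ^ 2 = 8 * (n:ℤ) + 5 := by
      subst hy' hz'; nlinarith [h]
    have ha : a % 2 = 0 := by
      rcases sq8 a with ⟨h1, h2⟩ | ⟨h1, h2 | h2⟩ <;>
        rcases sq8 u with ⟨h3, h4⟩ | ⟨h3, h4 | h4⟩ <;>
          rcases sq8 v with ⟨h5, h6⟩ | ⟨h5, h6 | h6⟩ <;> omega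
    exact ⟨a, u, v, ⟨hm, ha⟩, rfl, hy'.symm, hz'.symm⟩
  · rintro ⟨x, u, v, ⟨h, hx⟩, rfl, rfl, rfl⟩
    have hyz : u % 2 = 1 ∧ v % 2 = 0 ∨ u % 2 = 0 ∧ v % 2 = 1 := by
      rcases sq8 x with ⟨h1, h2⟩ | ⟨h1, h2 | h2⟩ <;>
        rcases sq8 u with ⟨h3, h4⟩ | ⟨h3, h4 | h4⟩ <;>
          rcases sq8 v with ⟨h5, h6⟩ | ⟨h5, h6 | h6⟩ <;> omega
    refine ⟨by nlinarith [h], by omega, by omega⟩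

-- L5 : even part of sol111 splits by which of u,v is odd
lemma L5 : sol111 (8 * (n:ℤ) + 5) ∩ {p | p.1 % 2 = 0} =
    (sol111 (8 * (n:ℤ) + 5) ∩ {p | p.2.1 % 2 = 1}) ∪
    (sol111 (8 * (n:ℤ) + 5) ∩ {p | p.2.2 % 2 = 1}) := by
  ext ⟨a, u, v⟩
  simp only [sol111, Set.mem_setOf_eq, Set.mem_union, Set.mem_inter_iff]
  constructor
  · rintro ⟨h, ha⟩
    rcases sq8 u with ⟨h3, h4⟩ | ⟨h3, h4 | h4⟩ <;>
      rcases sq8 v with ⟨h5, h6⟩ | ⟨h5, h6 | h6⟩ <;>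
        rcases sq8 a with ⟨h1, h2⟩ | ⟨h1, h2 | h2⟩ <;> omega
  · rintro (⟨h, hu⟩ | ⟨h, hv⟩) <;> refine ⟨h, ?_⟩ <;>
      rcases sq8 a with ⟨h1, h2⟩ | ⟨h1, h2 | h2⟩ <;>
        rcases sq8 u with ⟨h3, h4⟩ | ⟨h3, h4 | h4⟩ <;>
          rcases sq8 v with ⟨h5, h6⟩ | ⟨h5, h6 | h6⟩ <;> omega

lemma L5disj : Disjoint
    (sol111 (8 * (n:ℤ) + 5) ∩ {p | p.2.1 % 2 = 1})
    (sol111 (8 * (n:ℤ) + 5) ∩ {p | p.2.2 % 2 = 1}) := by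
  rw [Set.disjoint_left]
  rintro ⟨a, u, v⟩ ⟨h, hu⟩ ⟨-, hv⟩
  simp only [sol111, Set.mem_setOf_eq] at h hu hv
  rcases sq8 a with ⟨h1, h2⟩ | ⟨h1, h2 | h2⟩ <;>
    rcases sq8 u with ⟨h3, h4⟩ | ⟨h3, h4 | h4⟩ <;>
      rcases sq8 v with ⟨h5, h6⟩ | ⟨h5, h6 | h6⟩ <;> omega

-- L6 : swaps
lemma L6a : sol111 (8 * (n:ℤ) + 5) ∩ {p | p.2.1 % 2 = 1} =
    (fun p : ℤ × ℤ × ℤ => (p.2.1, p.1, p.2.2)) ''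
      (sol111 (8 * (n:ℤ) + 5) ∩ {p | p.1 % 2 = 1}) := by
  ext ⟨a, u, v⟩
  simp only [sol111, Set.mem_setOf_eq, Set.mem_inter_iff, Set.mem_image,
    Prod.mk.injEq, Prod.exists]
  constructor
  · rintro ⟨h, hu⟩
    exact ⟨u, a, v, ⟨by linarith [h], hu⟩, rfl, rfl, rfl⟩
  · rintro ⟨x, y, z, ⟨h, hx⟩, rfl, rfl, rfl⟩
    exact ⟨by linarith [h], hx⟩

lemma L6b : sol111 (8 * (n:ℤ) + 5) ∩ {p | p.2.2 % 2 = 1} =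
    (fun p : ℤ × ℤ × ℤ => (p.2.2, p.2.1, p.1)) ''
      (sol111 (8 * (n:ℤ) + 5) ∩ {p | p.1 % 2 = 1}) := by
  ext ⟨a, u, v⟩
  simp only [sol111, Set.mem_setOf_eq, Set.mem_inter_iff, Set.mem_image,
    Prod.mk.injEq, Prod.exists]
  constructor
  · rintro ⟨h, hv⟩
    exact ⟨v, u, a, ⟨by linarith [h], hv⟩, rfl, rfl, rfl⟩
  · rintro ⟨x, y, z, ⟨h, hx⟩, rfl, rfl, rfl⟩
    exact ⟨by linarith [h], hx⟩

-- L7 : odd-first part of sol111 ≅ sol122 m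
lemma L7 : sol111 (8 * (n:ℤ) + 5) ∩ {p | p.1 % 2 = 1} =
    (fun p : ℤ × ℤ × ℤ => (p.1, p.2.1 + p.2.2, p.2.1 - p.2.2)) '' sol122 (8 * (n:ℤ) + 5) := by
  ext ⟨x, u, v⟩
  simp only [sol111, sol122, Set.mem_setOf_eq, Set.mem_inter_iff, Set.mem_image,
    Prod.mk.injEq, Prod.exists]
  constructor
  · rintro ⟨h, hx⟩
    have huv : u % 2 = 0 ∧ v % 2 = 0 := by
      rcases sq8 x with ⟨h1, h2⟩ | ⟨h1, h2 | h2⟩ <;>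
        rcases sq8 u with ⟨h3, h4⟩ | ⟨h3, h4 | h4⟩ <;>
          rcases sq8 v with ⟨h5, h6⟩ | ⟨h5, h6 | h6⟩ <;> omega
    obtain ⟨y, hy⟩ : ∃ y, u + v = 2 * y := ⟨(u + v) / 2, by omega⟩
    obtain ⟨z, hz⟩ : ∃ z, u - v = 2 * z := ⟨(u - v) / 2, by omega⟩
    have hu : u = y + z := by omega
    have hv : v = y - z := by omega
    subst hu hv
    refine ⟨x, y, z, by nlinarith [h], rfl, by omega, by omega⟩
  · rintro ⟨x', y, z, h, rfl, rfl, rfl⟩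
    refine ⟨by nlinarith [h], ?_⟩
    rcases sq8 x' with ⟨h1, h2⟩ | ⟨h1, h2 | h2⟩ <;>
      rcases sq8 y with ⟨h3, h4⟩ | ⟨h3, h4 | h4⟩ <;>
        rcases sq8 z with ⟨h5, h6⟩ | ⟨h5, h6 | h6⟩ <;> omega

end steps

-- L8 : representations by all-odd triples vs triangular numbers
lemma L8 (n : ℕ) : Nat.card (sol122 (8 * (n:ℤ) + 5)) = 8 * T 1 2 2 n := by
  classical
  have memG : ∀ (b1 b2 b3 : Bool) (p q r : ℕ),
      1 * (p * (p + 1) / 2) + 2 * (q * (q + 1) / 2) + 2 * (r * (r + 1) / 2) = n →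
      (enc b1 p, enc b2 q, enc b3 r) ∈ sol122 (8 * (n:ℤ) + 5) := by
    intro b1 b2 b3 p q r h
    simp only [sol122, Set.mem_setOf_eq]
    rw [enc_sq, enc_sq, enc_sq]
    have hc : ((p * (p + 1) / 2 : ℕ) : ℤ) + 2 * ((q * (q + 1) / 2 : ℕ) : ℤ)
        + 2 * ((r * (r + 1) / 2 : ℕ) : ℤ) = (n : ℤ) := by
      have h' : p * (p + 1) / 2 + 2 * (q * (q + 1) / 2) + 2 * (r * (r + 1) / 2) = n := by omega
      exact_mod_cast h'
    linear_combination 4 * tri p + 8 * tri q + 8 * tri r + 8 * hc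
  let Tsub := {p : ℕ × ℕ × ℕ //
    1 * (p.1 * (p.1 + 1) / 2) + 2 * (p.2.1 * (p.2.1 + 1) / 2)
      + 2 * (p.2.2 * (p.2.2 + 1) / 2) = n}
  let G : (Bool × Bool × Bool) × Tsub → ↥(sol122 (8 * (n:ℤ) + 5)) :=
    fun w => ⟨(enc w.1.1 w.2.1.1, enc w.1.2.1 w.2.1.2.1, enc w.1.2.2 w.2.1.2.2),
      memG _ _ _ _ _ _ w.2.2⟩
  have hbij : Function.Bijective G := by
    constructor
    · rintro ⟨⟨b1, b2, b3⟩, ⟨⟨p, q, r⟩, hw⟩⟩ ⟨⟨c1, c2, c3⟩, ⟨⟨s, t, u⟩, hw'⟩⟩ h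
      simp only [G, Subtype.mk.injEq, Prod.mk.injEq] at h
      obtain ⟨h1, h2, h3⟩ := h
      obtain ⟨e1, e2⟩ := enc_inj h1
      obtain ⟨e3, e4⟩ := enc_inj h2
      obtain ⟨e5, e6⟩ := enc_inj h3
      subst e1 e2 e3 e4 e5 e6
      rfl
    · rintro ⟨⟨x, y, z⟩, hm⟩
      simp only [sol122, Set.mem_setOf_eq] at hm
      have hodd : x % 2 = 1 ∧ y % 2 = 1 ∧ z % 2 = 1 := by
        rcases sq8 x with ⟨h1, h2⟩ | ⟨h1, h2 | h2⟩ <;>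
          rcases sq8 y with ⟨h3, h4⟩ | ⟨h3, h4 | h4⟩ <;>
            rcases sq8 z with ⟨h5, h6⟩ | ⟨h5, h6 | h6⟩ <;> omega
      obtain ⟨b1, p, rfl⟩ := odd_enc x hodd.1
      obtain ⟨b2, q, rfl⟩ := odd_enc y hodd.2.1
      obtain ⟨b3, r, rfl⟩ := odd_enc z hodd.2.2
      rw [enc_sq, enc_sq, enc_sq] at hm
      have h8 : 8 * (((p * (p + 1) / 2 : ℕ) : ℤ) + 2 * ((q * (q + 1) / 2 : ℕ) : ℤ)
          + 2 * ((r * (r + 1) / 2 : ℕ) : ℤ)) = 8 * (n : ℤ) := by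
        linear_combination hm - 4 * tri p - 8 * tri q - 8 * tri r
      have hc : ((p * (p + 1) / 2 : ℕ) : ℤ) + 2 * ((q * (q + 1) / 2 : ℕ) : ℤ)
          + 2 * ((r * (r + 1) / 2 : ℕ) : ℤ) = (n : ℤ) := by omega
      have hcn : p * (p + 1) / 2 + 2 * (q * (q + 1) / 2) + 2 * (r * (r + 1) / 2) = n := by
        exact_mod_cast hc
      exact ⟨⟨(b1, b2, b3), ⟨(p, q, r), by simpa using hcn⟩⟩, rfl⟩
  have hcard := Nat.card_eq_of_bijective G hbij
  rw [← hcard, Nat.card_prod]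
  have h8 : Nat.card (Bool × Bool × Bool) = 8 := by
    simp [Nat.card_eq_fintype_card]
  rw [h8]
  rfl

lemma cardA (n : ℕ) :
    (sol122 (4 * (8 * (n:ℤ) + 5))).ncard = 3 * (sol122 (8 * (n:ℤ) + 5)).ncard := by
  have h211 : (sol211 (2 * (8 * (n:ℤ) + 5))).Finite := fin211 _
  have h111 : (sol111 (8 * (n:ℤ) + 5)).Finite := fin111 _
  have e1 : (sol122 (4 * (8 * (n:ℤ) + 5))).ncard = (sol211 (2 * (8 * (n:ℤ) + 5))).ncard := by
    rw [L1 n, Set.ncard_image_of_injective _ inj1]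
  have e2 : (sol211 (2 * (8 * (n:ℤ) + 5))).ncard
      = (sol122 (8 * (n:ℤ) + 5)).ncard + (sol111 (8 * (n:ℤ) + 5) ∩ {p | p.1 % 2 = 0}).ncard := by
    rw [L2 n, Set.ncard_union_eq (L2disj n) (h211.subset Set.inter_subset_left)
      (h211.subset Set.inter_subset_left), L3 n, Set.ncard_image_of_injective _ inj2,
      L4 n, Set.ncard_image_of_injective _ inj3]
  have e3 : (sol111 (8 * (n:ℤ) + 5) ∩ {p | p.1 % 2 = 0}).ncard
      = 2 * (sol111 (8 * (n:ℤ) + 5) ∩ {p | p.1 % 2 = 1}).ncard := by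
    rw [L5 n, Set.ncard_union_eq (L5disj n) (h111.subset Set.inter_subset_left)
      (h111.subset Set.inter_subset_left), L6a n, Set.ncard_image_of_injective _ injs12,
      L6b n, Set.ncard_image_of_injective _ injs13]
    ring
  have e4 : (sol111 (8 * (n:ℤ) + 5) ∩ {p | p.1 % 2 = 1}).ncard
      = (sol122 (8 * (n:ℤ) + 5)).ncard := by
    rw [L7 n, Set.ncard_image_of_injective _ inj3]
  omega

lemma N_eq_s3 (M : ℕ) : N 1 2 2 M = (sol122 (M : ℤ)).ncard := by
  rw [N, ← Nat.card_coe_set_eq]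
  apply Nat.card_congr
  apply Equiv.subtypeEquivRight
  intro p
  simp only [sol122, Set.mem_setOf_eq]
  push_cast
  constructor <;> intro h <;> linarith

theorem stmt_3 (n : ℕ) (hn : 0 < n) :
    (16 * T 1 2 2 n : ℤ) = (N 1 2 2 (4 * (8 * n + 5)) : ℤ) - (N 1 2 2 (8 * n + 5) : ℤ) := by
  have h4 : ((4 * (8 * n + 5) : ℕ) : ℤ) = 4 * (8 * (n:ℤ) + 5) := by push_cast; ring
  have h1 : ((8 * n + 5 : ℕ) : ℤ) = 8 * (n:ℤ) + 5 := by push_cast; ring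
  rw [N_eq_s3, N_eq_s3, h4, h1]
  have hB : (sol122 (8 * (n:ℤ) + 5)).ncard = 8 * T 1 2 2 n := by
    rw [← Nat.card_coe_set_eq]
    exact L8 n
  rw [cardA n, hB]
  push_cast
  ring
end

section
/- For every positive integer n, 16·T(2,3,3;n) = N(2,3,3;4(8n+8)) − N(2,3,3;8n+8). -/
/-!
Write `Q v = 2x² + 3y² + 3z²` with polar form `B`, and `m = 8n + 8`. Modulo 4, a representation
of `4m` is either all even, i.e. twice a representation of `m`, or all odd; so the right-hand side
counts the all-odd representations of `4m`.

For a sign vector `e = (±1, ±1, ±1)` we have `Q e = 8`, so reflection in `e` is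
`w ↦ w - (B(w, e) / 4) e`. An all-odd `u` with `Q u = m` is sent to the reflection
`v = 2u - (B(u, e) / 2) e` of `2u`, with `Q v = 4m`; `v` is all odd for exactly 4 of the 8 sign
vectors. Conversely `u` is recovered by reflecting `v` in `e` and halving, and when `32 ∣ Q v` this
gives an all-odd vector for exactly 2 sign vectors, a finite check modulo 32. Counting the pairs
`(u, e) ↔ (v, e)` both ways, `4m` has twice as many all-odd representations as `m`.

Finally the all-odd representations of `8n + 8` are the `(±(2a+1), ±(2b+1), ±(2c+1))` with
`2·a(a+1)/2 + 3·b(b+1)/2 + 3·c(c+1)/2 = n`, eight for each triangular representation of `n`.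
-/

theorem Finset.card_filter_product_eq_mul {α β : Type*} {s : Finset α} {t : Finset β}
    {r : α → β → Prop} [∀ a b, Decidable (r a b)] {k : ℕ}
    (h : ∀ a ∈ s, (t.filter (r a)).card = k) :
    ((s ×ˢ t).filter (fun p => r p.1 p.2)).card = s.card * k := by
  rw [Finset.card_filter, Finset.sum_product]
  simp only [← Finset.card_filter]
  rw [Finset.sum_congr rfl h, Finset.sum_const, smul_eq_mul]

namespace Form233

def B (u v : ℤ × ℤ × ℤ) : ℤ := 2 * u.1 * v.1 + 3 * u.2.1 * v.2.1 + 3 * u.2.2 * v.2.2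

def Q (v : ℤ × ℤ × ℤ) : ℤ := 2 * v.1 ^ 2 + 3 * v.2.1 ^ 2 + 3 * v.2.2 ^ 2

def AllCoords (p : ℤ → Prop) (v : ℤ × ℤ × ℤ) : Prop := p v.1 ∧ p v.2.1 ∧ p v.2.2

instance {p : ℤ → Prop} [DecidablePred p] : DecidablePred (AllCoords p) :=
  fun _ => inferInstanceAs (Decidable (_ ∧ _ ∧ _))

lemma N_eq_ncard (M : ℕ) : N 2 3 3 M = {v | Q v = M}.ncard := Nat.card_coe_set_eq _

lemma B_add_smul_left (r k e : ℤ × ℤ × ℤ) (n : ℤ) : B (r + n • k) e = B r e + n * B k e := by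
  simp only [B, Prod.fst_add, Prod.snd_add, Prod.smul_fst, Prod.smul_snd, smul_eq_mul]
  ring

lemma B_smul_left (n : ℤ) (k e : ℤ × ℤ × ℤ) : B (n • k) e = n * B k e := by
  simp only [B, Prod.smul_fst, Prod.smul_snd, smul_eq_mul]
  ring

lemma B_self (v : ℤ × ℤ × ℤ) : B v v = Q v := by
  simp only [B, Q]
  ring

lemma Q_add_smul (r k : ℤ × ℤ × ℤ) (n : ℤ) :
    Q (r + n • k) = Q r + n * (2 * B r k + n * Q k) := by
  simp only [Q, B, Prod.fst_add, Prod.snd_add, Prod.smul_fst, Prod.smul_snd, smul_eq_mul]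
  ring

lemma Q_smul (n : ℤ) (k : ℤ × ℤ × ℤ) : Q (n • k) = n ^ 2 * Q k := by
  simp only [Q, Prod.smul_fst, Prod.smul_snd, smul_eq_mul]
  ring

lemma exists_eq_add_smul (v : ℤ × ℤ × ℤ) {n : ℤ} (hn : 0 < n) :
    ∃ r k : ℤ × ℤ × ℤ, AllCoords (· ∈ Finset.Ico 0 n) r ∧ v = r + n • k := by
  refine ⟨(v.1 % n, v.2.1 % n, v.2.2 % n), (v.1 / n, v.2.1 / n, v.2.2 / n), ?_, ?_⟩
  · simp only [AllCoords, Finset.mem_Ico, Int.emod_nonneg _ hn.ne', Int.emod_lt_of_pos _ hn,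
      and_self]
  · ext <;> simp [Int.emod_add_mul_ediv]

lemma allCoords_odd_of_add_smul {r k : ℤ × ℤ × ℤ} {n : ℤ} (hn : Even n)
    (h : AllCoords Odd (r + n • k)) : AllCoords Odd r := by
  obtain ⟨h1, h2, h3⟩ := h
  simp only [Prod.fst_add, Prod.snd_add, Prod.smul_fst, Prod.smul_snd, smul_eq_mul] at h1 h2 h3
  exact ⟨by simpa using h1.sub_even (hn.mul_right k.1),
    by simpa using h2.sub_even (hn.mul_right k.2.1),
    by simpa using h3.sub_even (hn.mul_right k.2.2)⟩

lemma finite_setOf_Q_eq (M : ℤ) : {v | Q v = M}.Finite := by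
  refine (Set.finite_Icc (-M, -M, -M) (M, M, M)).subset fun v hv => ?_
  have bound (x : ℤ) (hx : x ^ 2 ≤ M) : -M ≤ x ∧ x ≤ M :=
    ⟨by nlinarith [Int.le_self_sq (-x)], by nlinarith [Int.le_self_sq x]⟩
  simp only [Set.mem_ofPred_eq, Q] at hv
  have h1 := bound v.1 (by nlinarith [sq_nonneg v.1, sq_nonneg v.2.1, sq_nonneg v.2.2])
  have h2 := bound v.2.1 (by nlinarith [sq_nonneg v.1, sq_nonneg v.2.1, sq_nonneg v.2.2])
  have h3 := bound v.2.2 (by nlinarith [sq_nonneg v.1, sq_nonneg v.2.1, sq_nonneg v.2.2])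
  exact ⟨⟨h1.1, h2.1, h3.1⟩, ⟨h1.2, h2.2, h3.2⟩⟩

def oddSols (M : ℤ) : Set (ℤ × ℤ × ℤ) := {v | Q v = M ∧ AllCoords Odd v}

lemma finite_oddSols (M : ℤ) : (oddSols M).Finite :=
  (finite_setOf_Q_eq M).subset fun _ hv => hv.1

lemma sq_emod_four (x : ℤ) : Even x ∧ x ^ 2 % 4 = 0 ∨ Odd x ∧ x ^ 2 % 4 = 1 := by
  rcases Int.even_or_odd x with hx | hx
  · obtain ⟨a, rfl⟩ := hx
    exact Or.inl ⟨⟨a, rfl⟩, by ring_nf; omega⟩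
  · exact Or.inr ⟨hx, Int.sq_mod_four_eq_one_of_odd hx⟩

lemma allCoords_even_or_odd_of_Q_eq_four_mul {v : ℤ × ℤ × ℤ} {M : ℤ} (h : Q v = 4 * M) :
    AllCoords Even v ∨ AllCoords Odd v := by
  unfold Q at h
  rcases sq_emod_four v.1 with ⟨h1, h1'⟩ | ⟨h1, h1'⟩ <;>
  rcases sq_emod_four v.2.1 with ⟨h2, h2'⟩ | ⟨h2, h2'⟩ <;>
  rcases sq_emod_four v.2.2 with ⟨h3, h3'⟩ | ⟨h3, h3'⟩ <;>
  first | exact Or.inl ⟨h1, h2, h3⟩ | exact Or.inr ⟨h1, h2, h3⟩ | omega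

lemma ncard_setOf_Q_eq_four_mul (M : ℤ) :
    {v | Q v = 4 * M}.ncard = {v | Q v = M}.ncard + (oddSols (4 * M)).ncard := by
  have hdiff : {v | Q v = 4 * M} \ {v | AllCoords Odd v} =
      (fun w => (2 : ℤ) • w) '' {v | Q v = M} := by
    ext v
    simp only [Set.mem_sdiff, Set.mem_ofPred_eq, Set.mem_image]
    constructor
    · rintro ⟨hQ, hodd⟩
      obtain ⟨⟨a, ha⟩, ⟨b, hb⟩, ⟨c, hc⟩⟩ :=
        (allCoords_even_or_odd_of_Q_eq_four_mul hQ).resolve_right hodd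
      have hv : v = (2 : ℤ) • (a, b, c) := by ext <;> simp <;> omega
      refine ⟨(a, b, c), ?_, hv.symm⟩
      rw [hv, Q_smul] at hQ
      linarith
    · rintro ⟨w, hw, rfl⟩
      refine ⟨by rw [Q_smul, hw]; ring, fun hodd => ?_⟩
      exact Int.not_even_iff_odd.2 hodd.1 ⟨w.1, by simp; ring⟩
  rw [← Set.ncard_inter_add_ncard_sdiff_eq_ncard {v | Q v = 4 * M} {v | AllCoords Odd v}
    (finite_setOf_Q_eq _), hdiff,
    Set.ncard_image_of_injective _ (smul_right_injective _ two_ne_zero)]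
  exact add_comm _ _

def signs : Finset (ℤ × ℤ × ℤ) := {1, -1} ×ˢ {1, -1} ×ˢ {1, -1}

lemma mem_signs {e : ℤ × ℤ × ℤ} : e ∈ signs ↔ AllCoords (fun c => c = 1 ∨ c = -1) e := by
  simp [signs, AllCoords]

lemma Q_of_mem_signs {e : ℤ × ℤ × ℤ} (he : e ∈ signs) : Q e = 8 := by
  obtain ⟨h1 | h1, h2 | h2, h3 | h3⟩ := mem_signs.1 he <;> simp [Q, h1, h2, h3]

lemma allCoords_odd_of_mem_signs {e : ℤ × ℤ × ℤ} (he : e ∈ signs) : AllCoords Odd e := by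
  obtain ⟨h1 | h1, h2 | h2, h3 | h3⟩ := mem_signs.1 he <;> simp [AllCoords, h1, h2, h3]

def ascend (u e : ℤ × ℤ × ℤ) : ℤ × ℤ × ℤ := (2 : ℤ) • u - (B u e / 2) • e

section ascend

variable {u e : ℤ × ℤ × ℤ}

lemma ascend_eq {k : ℤ} (hk : B u e = 2 * k) : ascend u e = (2 : ℤ) • u - k • e := by
  rw [ascend, hk, Int.mul_ediv_cancel_left _ two_ne_zero]

lemma Q_ascend (he : e ∈ signs) (hB : 2 ∣ B u e) : Q (ascend u e) = 4 * Q u := by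
  obtain ⟨k, hk⟩ := hB
  rw [ascend_eq hk, sub_eq_add_neg, ← neg_smul, Q_add_smul, Q_smul, B_smul_left, hk,
    Q_of_mem_signs he]
  ring

lemma B_ascend (he : e ∈ signs) (hB : 2 ∣ B u e) : B (ascend u e) e = -(2 * B u e) := by
  obtain ⟨k, hk⟩ := hB
  rw [ascend_eq hk, sub_eq_add_neg, ← neg_smul, B_add_smul_left, B_smul_left, B_self,
    Q_of_mem_signs he, hk]
  ring

lemma ascend_inj {u' : ℤ × ℤ × ℤ} (he : e ∈ signs) (hB : 2 ∣ B u e) (hB' : 2 ∣ B u' e)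
    (h : ascend u e = ascend u' e) : u = u' := by
  have hBeq : B u e = B u' e := by
    have := congrArg (B · e) h
    simp only [B_ascend he hB, B_ascend he hB'] at this
    linarith
  rw [ascend, ascend, hBeq, sub_left_inj] at h
  exact smul_right_injective _ two_ne_zero h

lemma allCoords_odd_ascend (he : e ∈ signs) (hB : B u e % 4 = 2) :
    AllCoords Odd (ascend u e) := by
  obtain ⟨k, hk⟩ : 2 ∣ B u e := by omega
  have hkodd : Odd k := Int.odd_iff.2 (by omega)
  obtain ⟨h1, h2, h3⟩ := allCoords_odd_of_mem_signs he
  rw [ascend_eq hk]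
  simp only [AllCoords, Prod.fst_sub, Prod.snd_sub, Prod.smul_fst, Prod.smul_snd, smul_eq_mul]
  exact ⟨(even_two_mul _).sub_odd (hkodd.mul h1), (even_two_mul _).sub_odd (hkodd.mul h2),
    (even_two_mul _).sub_odd (hkodd.mul h3)⟩

end ascend

/-- The reflection `v - (B v e / 4) • e` of `v` in `e` is integral and twice an all-odd vector. -/
def ReflectsToTwiceOdd (v e : ℤ × ℤ × ℤ) : Prop :=
  B v e % 8 = 4 ∧ AllCoords (· % 4 = 2) (v - (B v e / 4) • e)

instance (v e : ℤ × ℤ × ℤ) : Decidable (ReflectsToTwiceOdd v e) :=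
  inferInstanceAs (Decidable (_ ∧ _))

lemma reflectsToTwiceOdd_ascend {u e : ℤ × ℤ × ℤ} (hu : AllCoords Odd u) (he : e ∈ signs)
    (hB : B u e % 4 = 2) : ReflectsToTwiceOdd (ascend u e) e := by
  obtain ⟨k, hk⟩ : 2 ∣ B u e := by omega
  have hBa : B (ascend u e) e = -(4 * k) := by rw [B_ascend he ⟨k, hk⟩, hk]; ring
  have hdiv : -(4 * k) / 4 = -k := by omega
  refine ⟨by omega, ?_⟩
  rw [hBa, hdiv, ascend_eq hk, neg_smul, sub_neg_eq_add, sub_add_cancel]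
  simp only [AllCoords, Prod.smul_fst, Prod.smul_snd, smul_eq_mul, Int.odd_iff] at hu ⊢
  omega

lemma exists_ascend_eq {v e : ℤ × ℤ × ℤ} (he : e ∈ signs) (hg : ReflectsToTwiceOdd v e) :
    ∃ u, AllCoords Odd u ∧ B u e % 4 = 2 ∧ ascend u e = v := by
  obtain ⟨h8, hw⟩ := hg
  set σ := B v e / 4
  set w := v - σ • e
  set u : ℤ × ℤ × ℤ := (w.1 / 2, w.2.1 / 2, w.2.2 / 2)
  have hwu : w = (2 : ℤ) • u := by
    simp only [AllCoords] at hw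
    ext <;> simp [u] <;> omega
  have hv : v = (2 : ℤ) • u + σ • e := by rw [← hwu, sub_add_cancel]
  have hBu : B u e = 2 * -σ := by
    have := B_add_smul_left ((2 : ℤ) • u) e e σ
    rw [← hv, B_smul_left, B_self, Q_of_mem_signs he] at this
    omega
  refine ⟨u, ?_, by omega, ?_⟩
  · simp only [AllCoords, Int.odd_iff, u] at hw ⊢
    omega
  · rw [ascend_eq hBu, neg_smul, sub_neg_eq_add, hv]

lemma card_filter_B_emod_four {u : ℤ × ℤ × ℤ} (hu : AllCoords Odd u) :
    (signs.filter (fun e => B u e % 4 = 2)).card = 4 := by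
  have check : ∀ x ∈ Finset.Ico (0 : ℤ) 4, ∀ y ∈ Finset.Ico (0 : ℤ) 4, ∀ z ∈ Finset.Ico (0 : ℤ) 4,
      AllCoords Odd (x, y, z) → (signs.filter (fun e => B (x, y, z) e % 4 = 2)).card = 4 := by
    decide
  obtain ⟨r, k, ⟨h1, h2, h3⟩, rfl⟩ := exists_eq_add_smul u (n := 4) (by norm_num)
  have hr := allCoords_odd_of_add_smul (by decide) hu
  have hB (e : ℤ × ℤ × ℤ) : B (r + (4 : ℤ) • k) e % 4 = 2 ↔ B r e % 4 = 2 := by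
    rw [B_add_smul_left]
    omega
  rw [Finset.filter_congr fun e _ => hB e]
  exact check _ h1 _ h2 _ h3 hr

lemma reflectsToTwiceOdd_add_sixteen_smul_iff {r k e : ℤ × ℤ × ℤ} :
    ReflectsToTwiceOdd (r + (16 : ℤ) • k) e ↔ ReflectsToTwiceOdd r e := by
  have hdiv : (B r e + 16 * B k e) / 4 = B r e / 4 + 4 * B k e := by omega
  simp only [ReflectsToTwiceOdd, AllCoords, B_add_smul_left, hdiv, Prod.fst_add, Prod.snd_add,
    Prod.fst_sub, Prod.snd_sub, Prod.smul_fst, Prod.smul_snd, smul_eq_mul, add_mul, mul_assoc]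
  omega

lemma card_filter_reflectsToTwiceOdd {v : ℤ × ℤ × ℤ} (hv : AllCoords Odd v) (hQ : 32 ∣ Q v) :
    (signs.filter (ReflectsToTwiceOdd v)).card = 2 := by
  have check : ∀ x ∈ Finset.Ico (0 : ℤ) 16, ∀ y ∈ Finset.Ico (0 : ℤ) 16,
      ∀ z ∈ Finset.Ico (0 : ℤ) 16, AllCoords Odd (x, y, z) → 32 ∣ Q (x, y, z) →
        (signs.filter (ReflectsToTwiceOdd (x, y, z))).card = 2 := by
    decide
  obtain ⟨r, k, ⟨h1, h2, h3⟩, rfl⟩ := exists_eq_add_smul v (n := 16) (by norm_num)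
  have hr := allCoords_odd_of_add_smul (by decide) hv
  have hQr : 32 ∣ Q r := by
    rw [Q_add_smul] at hQ
    exact (Int.dvd_add_left ⟨B r k + 8 * Q k, by ring⟩).1 hQ
  rw [Finset.filter_congr fun e _ => reflectsToTwiceOdd_add_sixteen_smul_iff]
  exact check _ h1 _ h2 _ h3 hr hQr

def ascentPairs (U : Finset (ℤ × ℤ × ℤ)) : Finset ((ℤ × ℤ × ℤ) × (ℤ × ℤ × ℤ)) :=
  (U ×ˢ signs).filter fun p => B p.1 p.2 % 4 = 2

def descentPairs (V : Finset (ℤ × ℤ × ℤ)) : Finset ((ℤ × ℤ × ℤ) × (ℤ × ℤ × ℤ)) :=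
  (V ×ˢ signs).filter fun p => ReflectsToTwiceOdd p.1 p.2

lemma card_ascentPairs {U : Finset (ℤ × ℤ × ℤ)} (hU : ∀ u ∈ U, AllCoords Odd u) :
    (ascentPairs U).card = U.card * 4 :=
  Finset.card_filter_product_eq_mul fun u hu => card_filter_B_emod_four (hU u hu)

lemma card_descentPairs {V : Finset (ℤ × ℤ × ℤ)} (hV : ∀ v ∈ V, AllCoords Odd v ∧ 32 ∣ Q v) :
    (descentPairs V).card = V.card * 2 :=
  Finset.card_filter_product_eq_mul fun v hv =>
    card_filter_reflectsToTwiceOdd (hV v hv).1 (hV v hv).2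

lemma card_ascentPairs_eq_card_descentPairs {m : ℤ} {U V : Finset (ℤ × ℤ × ℤ)}
    (hU : ∀ u, u ∈ U ↔ u ∈ oddSols m) (hV : ∀ v, v ∈ V ↔ v ∈ oddSols (4 * m)) :
    (ascentPairs U).card = (descentPairs V).card := by
  refine Finset.card_bij (fun p _ => (ascend p.1 p.2, p.2)) ?_ ?_ ?_
  · rintro ⟨u, e⟩ hp
    simp only [ascentPairs, descentPairs, Finset.mem_filter, Finset.mem_product, hU, hV,
      oddSols, Set.mem_ofPred_eq] at hp ⊢
    obtain ⟨⟨⟨hQ, hodd⟩, he⟩, hB⟩ := hp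
    exact ⟨⟨⟨by rw [Q_ascend he (by omega), hQ], allCoords_odd_ascend he hB⟩, he⟩,
      reflectsToTwiceOdd_ascend hodd he hB⟩
  · rintro ⟨u, e⟩ hp ⟨u', e'⟩ hp' h
    simp only [ascentPairs, Finset.mem_filter, Finset.mem_product, Prod.mk.injEq] at hp hp' h
    obtain ⟨h, rfl⟩ := h
    rw [ascend_inj hp.1.2 (by omega) (by omega) h]
  · rintro ⟨v, e⟩ hp
    simp only [descentPairs, Finset.mem_filter, Finset.mem_product, hV, oddSols,
      Set.mem_ofPred_eq] at hp
    obtain ⟨⟨⟨hQ, -⟩, he⟩, hg⟩ := hp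
    obtain ⟨u, hu, hB, rfl⟩ := exists_ascend_eq he hg
    refine ⟨(u, e), ?_, rfl⟩
    simp only [ascentPairs, Finset.mem_filter, Finset.mem_product, hU, oddSols, Set.mem_ofPred_eq]
    refine ⟨⟨⟨?_, hu⟩, he⟩, hB⟩
    rw [Q_ascend he (by omega)] at hQ
    omega

lemma ncard_oddSols_four_mul {m : ℤ} (hm : 8 ∣ m) :
    (oddSols (4 * m)).ncard = 2 * (oddSols m).ncard := by
  have hU := finite_oddSols m
  have hV := finite_oddSols (4 * m)
  have hpairs := card_ascentPairs_eq_card_descentPairs (fun u => hU.mem_toFinset)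
    (fun v => hV.mem_toFinset)
  rw [card_ascentPairs fun u hu => (hU.mem_toFinset.1 hu).2,
    card_descentPairs fun v hv => ⟨(hV.mem_toFinset.1 hv).2,
      (hV.mem_toFinset.1 hv).1 ▸ mul_dvd_mul_left 4 hm⟩] at hpairs
  rw [Set.ncard_eq_toFinset_card _ hU, Set.ncard_eq_toFinset_card _ hV]
  omega

def triForm (a : ℕ × ℕ × ℕ) : ℕ :=
  2 * (a.1 * (a.1 + 1) / 2) + 3 * (a.2.1 * (a.2.1 + 1) / 2) + 3 * (a.2.2 * (a.2.2 + 1) / 2)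

lemma T_eq_ncard (n : ℕ) : T 2 3 3 n = {a | triForm a = n}.ncard := Nat.card_coe_set_eq _

lemma sq_sign_mul_two_mul_add_one {s : ℤ} (hs : s = 1 ∨ s = -1) (a : ℕ) :
    (s * (2 * a + 1)) ^ 2 = 8 * ((a * (a + 1) / 2 : ℕ) : ℤ) + 1 := by
  have h : ((a * (a + 1) / 2 : ℕ) : ℤ) * 2 = a * (a + 1) := by
    exact_mod_cast Nat.div_mul_cancel (Nat.even_mul_succ_self a).two_dvd
  rcases hs with rfl | rfl <;> linear_combination -4 * h

lemma sign_mul_two_mul_add_one_inj {s s' : ℤ} (hs : s = 1 ∨ s = -1) (hs' : s' = 1 ∨ s' = -1)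
    {a a' : ℕ} (h : s * (2 * a + 1) = s' * (2 * a' + 1)) : s = s' ∧ a = a' := by
  rcases hs with rfl | rfl <;> rcases hs' with rfl | rfl <;> omega

lemma exists_sign_mul_two_mul_add_one {x : ℤ} (hx : Odd x) :
    ∃ s, (s = 1 ∨ s = -1) ∧ ∃ a : ℕ, x = s * (2 * a + 1) := by
  obtain ⟨k, rfl⟩ := hx
  rcases le_or_gt 0 k with hk | hk
  · exact ⟨1, Or.inl rfl, k.toNat, by omega⟩
  · exact ⟨-1, Or.inr rfl, (-k - 1).toNat, by omega⟩

def signedOdd (a : ℕ × ℕ × ℕ) (e : ℤ × ℤ × ℤ) : ℤ × ℤ × ℤ :=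
  (e.1 * (2 * a.1 + 1), e.2.1 * (2 * a.2.1 + 1), e.2.2 * (2 * a.2.2 + 1))

lemma Q_signedOdd (a : ℕ × ℕ × ℕ) {e : ℤ × ℤ × ℤ} (he : e ∈ signs) :
    Q (signedOdd a e) = 8 * (triForm a : ℤ) + 8 := by
  obtain ⟨h1, h2, h3⟩ := mem_signs.1 he
  simp only [Q, signedOdd, triForm, sq_sign_mul_two_mul_add_one h1,
    sq_sign_mul_two_mul_add_one h2, sq_sign_mul_two_mul_add_one h3]
  push_cast
  ring

lemma injOn_signedOdd :
    Set.InjOn (fun p : (ℕ × ℕ × ℕ) × (ℤ × ℤ × ℤ) => signedOdd p.1 p.2) {p | p.2 ∈ signs} := by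
  rintro ⟨⟨a1, a2, a3⟩, e1, e2, e3⟩ he ⟨⟨b1, b2, b3⟩, f1, f2, f3⟩ hf h
  obtain ⟨he1, he2, he3⟩ := mem_signs.1 he
  obtain ⟨hf1, hf2, hf3⟩ := mem_signs.1 hf
  simp only [signedOdd, Prod.mk.injEq] at h
  obtain ⟨rfl, rfl⟩ := sign_mul_two_mul_add_one_inj he1 hf1 h.1
  obtain ⟨rfl, rfl⟩ := sign_mul_two_mul_add_one_inj he2 hf2 h.2.1
  obtain ⟨rfl, rfl⟩ := sign_mul_two_mul_add_one_inj he3 hf3 h.2.2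
  rfl

lemma oddSols_eight_mul_add_eight (n : ℕ) :
    oddSols (8 * n + 8) = (fun p => signedOdd p.1 p.2) '' ({a | triForm a = n} ×ˢ ↑signs) := by
  ext ⟨x, y, z⟩
  simp only [oddSols, Set.mem_ofPred_eq, Set.mem_image, Set.mem_prod, Finset.mem_coe]
  constructor
  · rintro ⟨hQ, hx, hy, hz⟩
    obtain ⟨s1, hs1, a1, rfl⟩ := exists_sign_mul_two_mul_add_one hx
    obtain ⟨s2, hs2, a2, rfl⟩ := exists_sign_mul_two_mul_add_one hy
    obtain ⟨s3, hs3, a3, rfl⟩ := exists_sign_mul_two_mul_add_one hz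
    have he : (s1, s2, s3) ∈ signs := mem_signs.2 ⟨hs1, hs2, hs3⟩
    refine ⟨((a1, a2, a3), (s1, s2, s3)), ⟨?_, he⟩, rfl⟩
    show triForm (a1, a2, a3) = n
    have := Q_signedOdd (a1, a2, a3) he
    simp only [signedOdd] at this
    omega
  · rintro ⟨⟨a, e⟩, ⟨ha, he⟩, h⟩
    rw [← h]
    refine ⟨by rw [Q_signedOdd a he, ha], ?_⟩
    obtain ⟨h1, h2, h3⟩ := allCoords_odd_of_mem_signs he
    exact ⟨h1.mul (odd_two_mul_add_one _), h2.mul (odd_two_mul_add_one _),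
      h3.mul (odd_two_mul_add_one _)⟩

lemma ncard_oddSols_eight_mul_add_eight (n : ℕ) :
    (oddSols (8 * n + 8)).ncard = 8 * T 2 3 3 n := by
  rw [oddSols_eight_mul_add_eight, (injOn_signedOdd.mono fun p hp => hp.2).ncard_image,
    Set.ncard_prod, Set.ncard_coe_finset, T_eq_ncard, show signs.card = 8 from rfl, mul_comm]

end Form233

theorem stmt_6_general (n : ℕ) :
    (16 * T 2 3 3 n : ℤ) = (N 2 3 3 (4 * (8 * n + 8)) : ℤ) - (N 2 3 3 (8 * n + 8) : ℤ) := by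
  have hsplit := Form233.ncard_setOf_Q_eq_four_mul (8 * n + 8)
  have hdescent := Form233.ncard_oddSols_four_mul (m := 8 * n + 8) ⟨n + 1, by ring⟩
  have htri := Form233.ncard_oddSols_eight_mul_add_eight n
  rw [Form233.N_eq_ncard, Form233.N_eq_ncard]
  push_cast
  omega

theorem stmt_6 (n : ℕ) (hn : 0 < n) :
    (16 * T 2 3 3 n : ℤ) = (N 2 3 3 (4 * (8 * n + 8)) : ℤ) - (N 2 3 3 (8 * n + 8) : ℤ) :=
  stmt_6_general n
end
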